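/- arXiv:2111.00370 — 9 statements merged into one kernel-verified Lean document; each statement's English description precedes it below -/
import Mathlib

section
/- If (H, r, D, U) is an oriented quantum algebra, then (H, r, U, D) is also an oriented quantum algebra. -/
open TensorProduct

noncomputable section

namespace OQApaper

variable (K : Type*) [Field K]

section Maps

variable (A B C D : Type*) [Ring A] [Ring B] [Ring C] [Ring D]
  [Algebra K A] [Algebra K B] [Algebra K C] [Algebra K D]

/-- The linear embedding `A ⊗ B → A ⊗ Bᵐᵒᵖ` (identity on the first factor, `op` on the
second), used to phrase statements about products in `H ⊗ H'^op`. -/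
def opify : A ⊗[K] B →ₗ[K] A ⊗[K] Bᵐᵒᵖ :=
  TensorProduct.map LinearMap.id (MulOpposite.opLinearEquiv K).toLinearMap

/-- `a ⊗ b ↦ a ⊗ b ⊗ 1` into `A ⊗ (B ⊗ C)`. -/
def emb12 : A ⊗[K] B →ₐ[K] A ⊗[K] (B ⊗[K] C) :=
  Algebra.TensorProduct.map (AlgHom.id K A) Algebra.TensorProduct.includeLeft

/-- `a ⊗ c ↦ a ⊗ 1 ⊗ c` into `A ⊗ (B ⊗ C)`. -/
def emb13 : A ⊗[K] C →ₐ[K] A ⊗[K] (B ⊗[K] C) :=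
  Algebra.TensorProduct.map (AlgHom.id K A) Algebra.TensorProduct.includeRight

/-- `b ⊗ c ↦ 1 ⊗ b ⊗ c` into `A ⊗ (B ⊗ C)`. -/
def emb23 : B ⊗[K] C →ₐ[K] A ⊗[K] (B ⊗[K] C) :=
  Algebra.TensorProduct.includeRight

/-- `b ⊗ a ↦ a ⊗ b ⊗ 1` into `A ⊗ (B ⊗ C)` (swapped version of `emb12`). -/
def emb21 : B ⊗[K] A →ₐ[K] A ⊗[K] (B ⊗[K] C) :=
  (emb12 K A B C).comp (Algebra.TensorProduct.comm K B A).toAlgHom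

/-- `c ⊗ b ↦ 1 ⊗ b ⊗ c` into `A ⊗ (B ⊗ C)` (swapped version of `emb23`). -/
def emb32 : C ⊗[K] B →ₐ[K] A ⊗[K] (B ⊗[K] C) :=
  (emb23 K A B C).comp (Algebra.TensorProduct.comm K C B).toAlgHom

/-- `a ⊗ c ↦ (a ⊗ 1) ⊗ (c ⊗ 1)` into `(A ⊗ B) ⊗ (C ⊗ D)`. -/
def E13 : A ⊗[K] C →ₐ[K] (A ⊗[K] B) ⊗[K] (C ⊗[K] D) :=
  Algebra.TensorProduct.map Algebra.TensorProduct.includeLeft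
    Algebra.TensorProduct.includeLeft

/-- `a ⊗ d ↦ (a ⊗ 1) ⊗ (1 ⊗ d)` into `(A ⊗ B) ⊗ (C ⊗ D)`. -/
def E14 : A ⊗[K] D →ₐ[K] (A ⊗[K] B) ⊗[K] (C ⊗[K] D) :=
  Algebra.TensorProduct.map Algebra.TensorProduct.includeLeft
    Algebra.TensorProduct.includeRight

/-- `b ⊗ d ↦ (1 ⊗ b) ⊗ (1 ⊗ d)` into `(A ⊗ B) ⊗ (C ⊗ D)`. -/
def E24 : B ⊗[K] D →ₐ[K] (A ⊗[K] B) ⊗[K] (C ⊗[K] D) :=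
  Algebra.TensorProduct.map Algebra.TensorProduct.includeRight
    Algebra.TensorProduct.includeRight

/-- `b ⊗ c ↦ (1 ⊗ b) ⊗ (c ⊗ 1)` into `(A ⊗ B) ⊗ (C ⊗ D)`. -/
def E23 : B ⊗[K] C →ₐ[K] (A ⊗[K] B) ⊗[K] (C ⊗[K] D) :=
  Algebra.TensorProduct.map Algebra.TensorProduct.includeRight
    Algebra.TensorProduct.includeLeft

/-- `c ⊗ b ↦ (1 ⊗ b) ⊗ (c ⊗ 1)` into `(A ⊗ B) ⊗ (C ⊗ D)` (swapped `E23`). -/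
def E32 : C ⊗[K] B →ₐ[K] (A ⊗[K] B) ⊗[K] (C ⊗[K] D) :=
  (E23 K A B C D).comp (Algebra.TensorProduct.comm K C B).toAlgHom

end Maps

section Defs

variable {A B : Type*} [Ring A] [Ring B] [Algebra K A] [Algebra K B]

/-- An oriented quantum algebra `(A, r, σ, τ)` (Definition 1.1), with the inverse `ri`
of `r` given explicitly:  `σ, τ` are commuting algebra automorphisms, `(σ ⊗ id)(r⁻¹)`
and `(id ⊗ τ)(r)` are inverses in `A ⊗ Aᵐᵒᵖ`, `(σ ⊗ σ)(r) = r = (τ ⊗ τ)(r)`, and `r`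
satisfies the quantum Yang–Baxter equation. -/
structure IsOQA (r ri : A ⊗[K] A) (σ τ : A ≃ₐ[K] A) : Prop where
  comm_auto : ∀ a : A, σ (τ a) = τ (σ a)
  mul_inv : r * ri = 1
  inv_mul : ri * r = 1
  op_mul_inv :
    opify K A A (Algebra.TensorProduct.map σ.toAlgHom (AlgHom.id K A) ri) *
      opify K A A (Algebra.TensorProduct.map (AlgHom.id K A) τ.toAlgHom r) = 1
  op_inv_mul :
    opify K A A (Algebra.TensorProduct.map (AlgHom.id K A) τ.toAlgHom r) *
      opify K A A (Algebra.TensorProduct.map σ.toAlgHom (AlgHom.id K A) ri) = 1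
  map_sigma : Algebra.TensorProduct.map σ.toAlgHom σ.toAlgHom r = r
  map_tau : Algebra.TensorProduct.map τ.toAlgHom τ.toAlgHom r = r
  qybe : emb12 K A A A r * emb13 K A A A r * emb23 K A A A r =
    emb23 K A A A r * emb13 K A A A r * emb12 K A A A r

/-- An OQA nonuple `(A, B, p, p', r, σ, τ, σ', τ')` (Definition 3.1), with explicit
inverses `pinv, p'inv, rinv`. -/
structure IsOQANonuple (p pinv : A ⊗[K] A) (p' p'inv : B ⊗[K] B) (r rinv : A ⊗[K] B)
    (σ τ : A ≃ₐ[K] A) (σ' τ' : B ≃ₐ[K] B) : Prop where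
  comm_auto : ∀ a : A, σ (τ a) = τ (σ a)
  comm_auto' : ∀ b : B, σ' (τ' b) = τ' (σ' b)
  p_mul_inv : p * pinv = 1
  p_inv_mul : pinv * p = 1
  p'_mul_inv : p' * p'inv = 1
  p'_inv_mul : p'inv * p' = 1
  r_mul_inv : r * rinv = 1
  r_inv_mul : rinv * r = 1
  op_mul_inv :
    opify K A B (Algebra.TensorProduct.map σ.toAlgHom (AlgHom.id K B) rinv) *
      opify K A B (Algebra.TensorProduct.map (AlgHom.id K A) τ'.toAlgHom r) = 1
  op_inv_mul :
    opify K A B (Algebra.TensorProduct.map (AlgHom.id K A) τ'.toAlgHom r) *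
      opify K A B (Algebra.TensorProduct.map σ.toAlgHom (AlgHom.id K B) rinv) = 1
  map_sigma : Algebra.TensorProduct.map σ.toAlgHom σ'.toAlgHom r = r
  map_tau : Algebra.TensorProduct.map τ.toAlgHom τ'.toAlgHom r = r
  cond3 : emb12 K A A B p * emb13 K A A B r * emb23 K A A B r =
    emb23 K A A B r * emb13 K A A B r * emb12 K A A B p
  cond4 : emb12 K A B B r * emb13 K A B B r * emb23 K A B B p' =
    emb23 K A B B p' * emb13 K A B B r * emb12 K A B B r

end Defs

section BialgDefs

variable {A B : Type*} [Ring A] [Ring B] [Bialgebra K A] [Bialgebra K B]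

/-- A weak R-matrix of `(A, B)` (Definition 2.6):  an invertible `r ∈ A ⊗ B` with
`(Δ ⊗ id)(r) = r₁₃ r₂₃` and `(id ⊗ Δ)(r) = r₁₃ r₁₂`. -/
structure IsWeakR (r : A ⊗[K] B) : Prop where
  isUnit : IsUnit r
  comul_left :
    TensorProduct.assoc K A A B
        (TensorProduct.map (Coalgebra.comul (R := K)) LinearMap.id r) =
      emb13 K A A B r * emb23 K A A B r
  comul_right :
    TensorProduct.map LinearMap.id (Coalgebra.comul (R := K)) r =
      emb13 K A B B r * emb12 K A B B r

/-- A quasitriangular structure `p` on a bialgebra `A` (Definition 2.4). -/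
structure IsQT (p : A ⊗[K] A) : Prop where
  comul_left :
    TensorProduct.assoc K A A A
        (TensorProduct.map (Coalgebra.comul (R := K)) LinearMap.id p) =
      emb13 K A A A p * emb23 K A A A p
  comul_right :
    TensorProduct.map LinearMap.id (Coalgebra.comul (R := K)) p =
      emb13 K A A A p * emb12 K A A A p
  almost_cocomm : ∀ h : A,
    TensorProduct.comm K A A (Coalgebra.comul (R := K) h) * p =
      p * Coalgebra.comul (R := K) h
  counit_left :
    TensorProduct.lid K A
      (TensorProduct.map (Coalgebra.counit (R := K)) LinearMap.id p) = 1
  counit_right :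
    TensorProduct.rid K A
      (TensorProduct.map LinearMap.id (Coalgebra.counit (R := K)) p) = 1

end BialgDefs

end OQApaper

open OQApaper

/-!
Put `g := τ⁻¹ ∘ σ`. Since `r`, and hence `r⁻¹`, is fixed by `σ ⊗ σ` and by `τ ⊗ τ`, one has
`(τ ⊗ id)(r⁻¹) = (id ⊗ g)((σ ⊗ id)(r⁻¹))`; since `σ` and `τ` commute, `σ = g ∘ τ`, so
`(id ⊗ σ)(r) = (id ⊗ g)((id ⊗ τ)(r))`. So the pair required to be mutually inverse for `(A, r, τ, σ)`
is the image of the corresponding pair for `(A, r, σ, τ)` under the algebra map `id ⊗ gᵒᵖ` of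
`A ⊗ Aᵒᵖ`. The other axioms are symmetric in the two automorphisms.
-/

section

open Algebra.TensorProduct

variable {K : Type*} [Field K]

theorem map_eq_self_of_inverse {M F : Type*} [Monoid M] [FunLike F M M] [MonoidHomClass F M M]
    (f : F) {a b : M} (hf : f a = a) (hab : a * b = 1) (hba : b * a = 1) : f b = b :=
  left_inv_eq_right_inv (by rw [← hf, ← map_mul, hba, map_one]) hab

theorem opify_map {A A' B B' : Type*} [Ring A] [Ring A'] [Ring B] [Ring B']
    [Algebra K A] [Algebra K A'] [Algebra K B] [Algebra K B']
    (f : A →ₐ[K] A') (g : B →ₐ[K] B') (x : A ⊗[K] B) :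
    opify K A' B' (map f g x) = map f (AlgHom.op g) (opify K A B x) := by
  induction x using TensorProduct.induction_on with
  | zero => simp only [map_zero]
  | tmul a b => simp [opify]
  | add x y hx hy => simp only [map_add, hx, hy]

-- Both sides become `x` after applying the injective map `id ⊗ τ`.
theorem map_left_eq_of_map_fixed {A : Type*} [Ring A] [Algebra K A] (σ τ : A ≃ₐ[K] A)
    {x : A ⊗[K] A} (hσ : map σ.toAlgHom σ.toAlgHom x = x)
    (hτ : map τ.toAlgHom τ.toAlgHom x = x) :
    map τ.toAlgHom (AlgHom.id K A) x =
      map (AlgHom.id K A) (σ.trans τ.symm).toAlgHom (map σ.toAlgHom (AlgHom.id K A) x) := by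
  apply (Algebra.TensorProduct.congr (AlgEquiv.refl : A ≃ₐ[K] A) τ).injective
  have hlhs : (map (AlgHom.id K A) τ.toAlgHom).comp (map τ.toAlgHom (AlgHom.id K A)) =
      map τ.toAlgHom τ.toAlgHom := by
    ext <;> simp
  have hrhs : (map (AlgHom.id K A) τ.toAlgHom).comp ((map (AlgHom.id K A)
      (σ.trans τ.symm).toAlgHom).comp (map σ.toAlgHom (AlgHom.id K A))) =
      map σ.toAlgHom σ.toAlgHom := by
    ext <;> simp
  simp only [Algebra.TensorProduct.congr_apply, AlgEquiv.refl_toAlgHom]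
  rw [← AlgHom.comp_apply, hlhs, hτ, ← AlgHom.comp_apply, ← AlgHom.comp_apply, AlgHom.comp_assoc,
    hrhs, hσ]

end

/-- If `(H, r, D, U)` is an oriented quantum algebra, then `(H, r, U, D)` is
also an oriented quantum algebra. -/
theorem oqa_swap (K : Type*) [Field K] (A : Type*) [Ring A] [Algebra K A]
    (r ri : A ⊗[K] A) (σ τ : A ≃ₐ[K] A)
    (h : IsOQA K r ri σ τ) : IsOQA K r ri τ σ := by
  set g : A →ₐ[K] A := (σ.trans τ.symm).toAlgHom
  have hg : g.comp τ.toAlgHom = σ.toAlgHom := by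
    ext a
    simp [g, h.comm_auto a]
  have twist_ri : opify K A A (Algebra.TensorProduct.map τ.toAlgHom (AlgHom.id K A) ri) =
      Algebra.TensorProduct.map (AlgHom.id K A) g.op
        (opify K A A (Algebra.TensorProduct.map σ.toAlgHom (AlgHom.id K A) ri)) := by
    rw [← opify_map, map_left_eq_of_map_fixed σ τ
      (map_eq_self_of_inverse _ h.map_sigma h.mul_inv h.inv_mul)
      (map_eq_self_of_inverse _ h.map_tau h.mul_inv h.inv_mul)]
  have twist_r : opify K A A (Algebra.TensorProduct.map (AlgHom.id K A) σ.toAlgHom r) =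
      Algebra.TensorProduct.map (AlgHom.id K A) g.op
        (opify K A A (Algebra.TensorProduct.map (AlgHom.id K A) τ.toAlgHom r)) := by
    rw [← opify_map, ← AlgHom.comp_apply, ← Algebra.TensorProduct.map_id_comp, hg]
  exact ⟨fun a => (h.comm_auto a).symm, h.mul_inv, h.inv_mul,
    by rw [twist_ri, twist_r, ← map_mul, h.op_mul_inv, map_one],
    by rw [twist_ri, twist_r, ← map_mul, h.op_inv_mul, map_one], h.map_tau, h.map_sigma, h.qybe⟩
end
end

section
/- If (H, r, D, U) and (H', r', D', U') are oriented quantum algebras, then (H ⊗ H', r'', D ⊗ D', U ⊗ U') is an oriented quantum algebra, where r'' = (id_H ⊗ τ_{H,H'} ⊗ id_{H'})(r ⊗ r') and τ_{H,H'} is the flip map h ⊗ h' ↦ h' ⊗ h. -/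
open TensorProduct

noncomputable section

open OQApaper

/-! The element `r''` is the image of `r ⊗ r'` under the algebra isomorphism
`(H ⊗ H) ⊗ (H' ⊗ H') ≃ (H ⊗ H') ⊗ (H ⊗ H')` swapping the middle factors. Every structure map
occurring in the axioms (the automorphisms, the legs `r₁₂, r₁₃, r₂₃`, the passage to
`H ⊗ Hᵒᵖ`) intertwines this middle swap with an algebra homomorphism `φ` out of a tensor product
of the corresponding objects for `H` and `H'`. Since `φ (x ⊗ y) * φ (x' ⊗ y') = φ (x x' ⊗ y y')`,
each axiom for `r''` is the tensor product of the same axiom for `r` and for `r'`. -/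

theorem Algebra.TensorProduct.congr_toAlgHom {K A B C D : Type*} [CommSemiring K] [Semiring A]
    [Semiring B] [Semiring C] [Semiring D] [Algebra K A] [Algebra K B] [Algebra K C]
    [Algebra K D] (f : A ≃ₐ[K] C) (g : B ≃ₐ[K] D) :
    (congr f g).toAlgHom = map f.toAlgHom g.toAlgHom :=
  rfl

namespace OQApaper

open Algebra.TensorProduct

section TensorProduct

variable {K X Y Z : Type*} [CommSemiring K] [Semiring X] [Semiring Y] [Semiring Z]
  [Algebra K X] [Algebra K Y] [Algebra K Z]

theorem map_tmul_mul_map_tmul (φ : X ⊗[K] Y →ₐ[K] Z) (x x' : X) (y y' : Y) :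
    φ (x ⊗ₜ y) * φ (x' ⊗ₜ y') = φ ((x * x') ⊗ₜ (y * y')) := by
  rw [← map_mul, tmul_mul_tmul]

theorem map_tmul_mul_map_tmul_eq_one (φ : X ⊗[K] Y →ₐ[K] Z) {x x' : X} {y y' : Y}
    (hx : x * x' = 1) (hy : y * y' = 1) : φ (x ⊗ₜ y) * φ (x' ⊗ₜ y') = 1 := by
  rw [map_tmul_mul_map_tmul, hx, hy, ← one_def, map_one]

theorem congr_congr_comm {σ τ : X ≃ₐ[K] X} {σ' τ' : Y ≃ₐ[K] Y}
    (hX : ∀ x, σ (τ x) = τ (σ x)) (hY : ∀ y, σ' (τ' y) = τ' (σ' y)) (z : X ⊗[K] Y) :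
    congr σ σ' (congr τ τ' z) = congr τ τ' (congr σ σ' z) := by
  induction z using TensorProduct.induction_on with
  | zero => simp
  | tmul x y => simp [hX, hY]
  | add z z' hz hz' => simp only [map_add, hz, hz']

end TensorProduct

section MiddleSwap

variable {K : Type*} [Field K] {A₁ A₂ A₃ B₁ B₂ B₃ : Type*} [Ring A₁] [Ring A₂] [Ring A₃]
  [Ring B₁] [Ring B₂] [Ring B₃] [Algebra K A₁] [Algebra K A₂] [Algebra K A₃]
  [Algebra K B₁] [Algebra K B₂] [Algebra K B₃]

local notation "swap₂" => Algebra.TensorProduct.tensorTensorTensorComm K K K K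

local notation "swapₗ" => TensorProduct.tensorTensorTensorComm K

theorem map_map_tensorTensorTensorComm {C₁ C₂ D₁ D₂ : Type*} [Ring C₁] [Ring C₂] [Ring D₁]
    [Ring D₂] [Algebra K C₁] [Algebra K C₂] [Algebra K D₁] [Algebra K D₂]
    (f₁ : A₁ →ₐ[K] C₁) (f₂ : A₂ →ₐ[K] C₂) (g₁ : B₁ →ₐ[K] D₁) (g₂ : B₂ →ₐ[K] D₂)
    (x : A₁ ⊗[K] A₂) (y : B₁ ⊗[K] B₂) :
    map (map f₁ g₁) (map f₂ g₂) (swapₗ A₁ A₂ B₁ B₂ (x ⊗ₜ y)) =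
      swapₗ C₁ C₂ D₁ D₂ (map f₁ f₂ x ⊗ₜ map g₁ g₂ y) := by
  have : (map (map f₁ g₁) (map f₂ g₂)).comp (swap₂ A₁ A₂ B₁ B₂).toAlgHom =
      (swap₂ C₁ C₂ D₁ D₂).toAlgHom.comp (map (map f₁ f₂) (map g₁ g₂)) := by
    ext <;> simp [one_def]
  exact congr($this (x ⊗ₜ y))

variable (K A₁ A₂ B₁ B₂) in
def opMiddleSwap :
    (A₁ ⊗[K] A₂ᵐᵒᵖ) ⊗[K] (B₁ ⊗[K] B₂ᵐᵒᵖ) →ₐ[K] (A₁ ⊗[K] B₁) ⊗[K] (A₂ ⊗[K] B₂)ᵐᵒᵖ :=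
  (map (.id K _) (opAlgEquiv K K A₂ B₂).toAlgHom).comp (swap₂ A₁ A₂ᵐᵒᵖ B₁ B₂ᵐᵒᵖ).toAlgHom

theorem opify_tensorTensorTensorComm (x : A₁ ⊗[K] A₂) (y : B₁ ⊗[K] B₂) :
    opify K (A₁ ⊗[K] B₁) (A₂ ⊗[K] B₂) (swapₗ A₁ A₂ B₁ B₂ (x ⊗ₜ y)) =
      opMiddleSwap K A₁ A₂ B₁ B₂ (opify K A₁ A₂ x ⊗ₜ opify K B₁ B₂ y) := by
  have : (opify K (A₁ ⊗[K] B₁) (A₂ ⊗[K] B₂)).comp (swapₗ A₁ A₂ B₁ B₂).toLinearMap =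
      (opMiddleSwap K A₁ A₂ B₁ B₂).toLinearMap.comp
        (TensorProduct.map (opify K A₁ A₂) (opify K B₁ B₂)) := by
    ext; simp [opify, opMiddleSwap]
  exact congr($this (x ⊗ₜ y))

variable (K A₁ A₂ A₃ B₁ B₂ B₃) in
def middleSwap₃ : (A₁ ⊗[K] (A₂ ⊗[K] A₃)) ⊗[K] (B₁ ⊗[K] (B₂ ⊗[K] B₃)) →ₐ[K]
    (A₁ ⊗[K] B₁) ⊗[K] ((A₂ ⊗[K] B₂) ⊗[K] (A₃ ⊗[K] B₃)) :=
  (map (.id K _) (swap₂ A₂ A₃ B₂ B₃).toAlgHom).comp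
    (swap₂ A₁ (A₂ ⊗[K] A₃) B₁ (B₂ ⊗[K] B₃)).toAlgHom

theorem emb12_tensorTensorTensorComm (x : A₁ ⊗[K] A₂) (y : B₁ ⊗[K] B₂) :
    emb12 K (A₁ ⊗[K] B₁) (A₂ ⊗[K] B₂) (A₃ ⊗[K] B₃) (swapₗ A₁ A₂ B₁ B₂ (x ⊗ₜ y)) =
      middleSwap₃ K A₁ A₂ A₃ B₁ B₂ B₃ (emb12 K A₁ A₂ A₃ x ⊗ₜ emb12 K B₁ B₂ B₃ y) := by
  have : (emb12 K (A₁ ⊗[K] B₁) (A₂ ⊗[K] B₂) (A₃ ⊗[K] B₃)).comp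
        (swap₂ A₁ A₂ B₁ B₂).toAlgHom =
      (middleSwap₃ K A₁ A₂ A₃ B₁ B₂ B₃).comp (map (emb12 K A₁ A₂ A₃) (emb12 K B₁ B₂ B₃)) := by
    ext <;> simp [emb12, middleSwap₃, one_def]
  exact congr($this (x ⊗ₜ y))

theorem emb13_tensorTensorTensorComm (x : A₁ ⊗[K] A₃) (y : B₁ ⊗[K] B₃) :
    emb13 K (A₁ ⊗[K] B₁) (A₂ ⊗[K] B₂) (A₃ ⊗[K] B₃) (swapₗ A₁ A₃ B₁ B₃ (x ⊗ₜ y)) =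
      middleSwap₃ K A₁ A₂ A₃ B₁ B₂ B₃ (emb13 K A₁ A₂ A₃ x ⊗ₜ emb13 K B₁ B₂ B₃ y) := by
  have : (emb13 K (A₁ ⊗[K] B₁) (A₂ ⊗[K] B₂) (A₃ ⊗[K] B₃)).comp
        (swap₂ A₁ A₃ B₁ B₃).toAlgHom =
      (middleSwap₃ K A₁ A₂ A₃ B₁ B₂ B₃).comp (map (emb13 K A₁ A₂ A₃) (emb13 K B₁ B₂ B₃)) := by
    ext <;> simp [emb13, middleSwap₃, one_def]
  exact congr($this (x ⊗ₜ y))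

theorem emb23_tensorTensorTensorComm (x : A₂ ⊗[K] A₃) (y : B₂ ⊗[K] B₃) :
    emb23 K (A₁ ⊗[K] B₁) (A₂ ⊗[K] B₂) (A₃ ⊗[K] B₃) (swapₗ A₂ A₃ B₂ B₃ (x ⊗ₜ y)) =
      middleSwap₃ K A₁ A₂ A₃ B₁ B₂ B₃ (emb23 K A₁ A₂ A₃ x ⊗ₜ emb23 K B₁ B₂ B₃ y) := by
  have : (emb23 K (A₁ ⊗[K] B₁) (A₂ ⊗[K] B₂) (A₃ ⊗[K] B₃)).comp
        (swap₂ A₂ A₃ B₂ B₃).toAlgHom =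
      (middleSwap₃ K A₁ A₂ A₃ B₁ B₂ B₃).comp (map (emb23 K A₁ A₂ A₃) (emb23 K B₁ B₂ B₃)) := by
    ext <;> simp [emb23, middleSwap₃, one_def]
  exact congr($this (x ⊗ₜ y))

end MiddleSwap

end OQApaper

/-- the tensor product of two OQAs is an OQA, with
`r'' = (id ⊗ τ_{H,H'} ⊗ id)(r ⊗ r')` (middle-swap). -/
theorem oqa_tensorProduct (K : Type*) [Field K] (A B : Type*) [Ring A] [Ring B]
    [Algebra K A] [Algebra K B]
    (r ri : A ⊗[K] A) (r' ri' : B ⊗[K] B)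
    (σ τ : A ≃ₐ[K] A) (σ' τ' : B ≃ₐ[K] B)
    (h : IsOQA K r ri σ τ) (h' : IsOQA K r' ri' σ' τ') :
    IsOQA K (TensorProduct.tensorTensorTensorComm K A A B B (r ⊗ₜ[K] r'))
      (TensorProduct.tensorTensorTensorComm K A A B B (ri ⊗ₜ[K] ri'))
      (Algebra.TensorProduct.congr σ σ') (Algebra.TensorProduct.congr τ τ') := by
  set middleSwap := (Algebra.TensorProduct.tensorTensorTensorComm K K K K A A B B).toAlgHom
  constructor
  case comm_auto => exact congr_congr_comm h.comm_auto h'.comm_auto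
  case mul_inv => exact map_tmul_mul_map_tmul_eq_one middleSwap h.mul_inv h'.mul_inv
  case inv_mul => exact map_tmul_mul_map_tmul_eq_one middleSwap h.inv_mul h'.inv_mul
  case qybe =>
    simp only [emb12_tensorTensorTensorComm, emb13_tensorTensorTensorComm,
      emb23_tensorTensorTensorComm, map_tmul_mul_map_tmul, h.qybe, h'.qybe]
  all_goals simp only [← Algebra.TensorProduct.map_id, Algebra.TensorProduct.congr_toAlgHom,
    map_map_tensorTensorTensorComm, opify_tensorTensorTensorComm]
  case op_mul_inv => exact map_tmul_mul_map_tmul_eq_one _ h.op_mul_inv h'.op_mul_inv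
  case op_inv_mul => exact map_tmul_mul_map_tmul_eq_one _ h.op_inv_mul h'.op_inv_mul
  case map_sigma => rw [h.map_sigma, h'.map_sigma]
  case map_tau => rw [h.map_tau, h'.map_tau]
end
end

section
/- If H and H' are Hopf algebras with bijective antipodes S_H and S_{H'}, and r ∈ H ⊗ H' is a weak R-matrix of (H, H'), then (S_H ⊗ S_{H'})(r) = r. -/
open TensorProduct

noncomputable section

open OQApaper

/-!
Write `s = (S ⊗ id)(r)`. Applying `μ ∘ (S ⊗ id)` to the first two legs of
`(Δ ⊗ id)(r) = r₁₃ r₂₃` gives `s r = (ε ⊗ id)(r)`, and applying `μ ∘ (ηε ⊗ id)` instead gives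
`r = (ε ⊗ id)(r) r`, so `(ε ⊗ id)(r) = 1` and `s = r⁻¹`. As `id ⊗ Δ` is multiplicative,
`(id ⊗ Δ)(s) = ((id ⊗ Δ)(r))⁻¹ = (r₁₃ r₁₂)⁻¹ = s₁₂ s₁₃`. Slicing this the same way on the last
two legs gives `(id ⊗ ε)(s) = 1` and then `s · (id ⊗ S)(s) = 1`, so
`(S ⊗ S)(r) = (id ⊗ S)(s) = s⁻¹ = r`.
-/

namespace OQApaper

open LinearMap WithConv HopfAlgebra

section

variable {K : Type*} [Field K] {A B : Type*} [Ring A] [Ring B] [Algebra K A] [Algebra K B]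

/-- `a ⊗ (a' ⊗ b) ↦ f(a) a' ⊗ b`. -/
def sliceLeft (f : A →ₗ[K] A) : A ⊗[K] (A ⊗[K] B) →ₗ[K] A ⊗[K] B :=
  rTensor B (mul' K A ∘ₗ rTensor A f) ∘ₗ (TensorProduct.assoc K A A B).symm.toLinearMap

/-- `a ⊗ (b ⊗ b') ↦ a ⊗ b g(b')`. -/
def sliceRight (g : B →ₗ[K] B) : A ⊗[K] (B ⊗[K] B) →ₗ[K] A ⊗[K] B :=
  lTensor A (mul' K B ∘ₗ lTensor B g)

lemma sliceLeft_emb13_mul_emb23 (f : A →ₗ[K] A) (x y : A ⊗[K] B) :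
    sliceLeft f (emb13 K A A B x * emb23 K A A B y) = rTensor B f x * y := by
  induction x using TensorProduct.induction_on with
  | zero => simp
  | add u v hu hv => simp only [map_add, add_mul, hu, hv]
  | tmul a b =>
    induction y using TensorProduct.induction_on with
    | zero => simp
    | add u v hu hv => simp only [map_add, mul_add, hu, hv]
    | tmul a' b' => simp [sliceLeft, emb13, emb23, Algebra.TensorProduct.tmul_mul_tmul]

lemma sliceRight_emb12_mul_emb13 (g : B →ₗ[K] B) (x y : A ⊗[K] B) :
    sliceRight g (emb12 K A B B x * emb13 K A B B y) = x * lTensor A g y := by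
  induction x using TensorProduct.induction_on with
  | zero => simp
  | add u v hu hv => simp only [map_add, add_mul, hu, hv]
  | tmul a b =>
    induction y using TensorProduct.induction_on with
    | zero => simp
    | add u v hu hv => simp only [map_add, mul_add, hu, hv]
    | tmul a' b' => simp [sliceRight, emb12, emb13, Algebra.TensorProduct.tmul_mul_tmul]

end

section

variable {K : Type*} [Field K] {A B : Type*} [Ring A] [Ring B]

lemma sliceLeft_assoc_map_comul [Bialgebra K A] [Algebra K B] (f : A →ₗ[K] A)
    (x : A ⊗[K] B) :
    sliceLeft f (TensorProduct.assoc K A A B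
        (TensorProduct.map (Coalgebra.comul (R := K)) LinearMap.id x)) =
      rTensor B (toConv f * toConv LinearMap.id).ofConv x := by
  induction x using TensorProduct.induction_on with
  | zero => simp
  | add u v hu hv => simp only [map_add, hu, hv]
  | tmul a b => simp [sliceLeft, convMul_apply, ← LinearMap.rTensor_def]

lemma sliceRight_map_comul [Algebra K A] [Bialgebra K B] (g : B →ₗ[K] B) (x : A ⊗[K] B) :
    sliceRight g (TensorProduct.map LinearMap.id (Coalgebra.comul (R := K)) x) =
      lTensor A (toConv LinearMap.id * toConv g).ofConv x := by
  induction x using TensorProduct.induction_on with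
  | zero => simp
  | add u v hu hv => simp only [map_add, hu, hv]
  | tmul a b => simp [sliceRight, convMul_apply, ← LinearMap.lTensor_def]

end

namespace IsWeakR

variable {K : Type*} [Field K] {A B : Type*} [Ring A] [Ring B]

lemma rTensor_counit_eq_one [Bialgebra K A] [Bialgebra K B] {r : A ⊗[K] B}
    (hw : IsWeakR K r) : rTensor B (Algebra.linearMap K A ∘ₗ Coalgebra.counit) r = 1 := by
  refine hw.isUnit.mul_eq_right.mp ?_
  rw [← sliceLeft_emb13_mul_emb23, ← hw.comul_left, sliceLeft_assoc_map_comul,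
    ← LinearMap.convOne_def, one_mul, ofConv_toConv, rTensor_id_apply]

section

variable [HopfAlgebra K A] [Bialgebra K B] {r : A ⊗[K] B}

lemma rTensor_antipode_mul (hw : IsWeakR K r) : rTensor B (antipode K) r * r = 1 := by
  rw [← sliceLeft_emb13_mul_emb23, ← hw.comul_left, sliceLeft_assoc_map_comul, antipode_mul_id]
  exact hw.rTensor_counit_eq_one

lemma mul_rTensor_antipode (hw : IsWeakR K r) : r * rTensor B (antipode K) r = 1 := by
  obtain ⟨u, rfl⟩ := hw.isUnit
  rw [← Units.inv_eq_of_mul_eq_one_left hw.rTensor_antipode_mul, Units.mul_inv]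

lemma isUnit_rTensor_antipode (hw : IsWeakR K r) : IsUnit (rTensor B (antipode K) r) :=
  ⟨⟨_, r, hw.rTensor_antipode_mul, hw.mul_rTensor_antipode⟩, rfl⟩

lemma map_comul_rTensor_antipode (hw : IsWeakR K r) :
    TensorProduct.map LinearMap.id (Coalgebra.comul (R := K)) (rTensor B (antipode K) r) =
      emb12 K A B B (rTensor B (antipode K) r) * emb13 K A B B (rTensor B (antipode K) r) := by
  set s := rTensor B (antipode K) r
  let comulRight := Algebra.TensorProduct.map (AlgHom.id K A) (Bialgebra.comulAlgHom K B)
  have comulRight_apply (x : A ⊗[K] B) :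
      comulRight x = TensorProduct.map LinearMap.id (Coalgebra.comul (R := K)) x := rfl
  rw [← comulRight_apply]
  refine left_inv_eq_right_inv (a := comulRight r) ?_ ?_
  · rw [← map_mul, hw.rTensor_antipode_mul, map_one]
  · calc comulRight r * (emb12 K A B B s * emb13 K A B B s)
        = emb13 K A B B r * emb12 K A B B (r * s) * emb13 K A B B s := by
          rw [comulRight_apply, hw.comul_right, map_mul, mul_assoc, mul_assoc, mul_assoc]
      _ = 1 := by
          rw [hw.mul_rTensor_antipode, map_one, mul_one, ← map_mul, hw.mul_rTensor_antipode,
            map_one]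

end

section

variable [HopfAlgebra K A] [HopfAlgebra K B] {r : A ⊗[K] B}

lemma lTensor_counit_rTensor_antipode_eq_one (hw : IsWeakR K r) :
    lTensor A (Algebra.linearMap K B ∘ₗ Coalgebra.counit) (rTensor B (antipode K) r) = 1 := by
  refine hw.isUnit_rTensor_antipode.mul_eq_left.mp ?_
  rw [← sliceRight_emb12_mul_emb13, ← hw.map_comul_rTensor_antipode, sliceRight_map_comul,
    ← LinearMap.convOne_def, mul_one, ofConv_toConv, lTensor_id_apply]

lemma rTensor_antipode_mul_map_antipode (hw : IsWeakR K r) :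
    rTensor B (antipode K) r * TensorProduct.map (antipode K) (antipode K) r = 1 := by
  rw [← lTensor_comp_rTensor, comp_apply, ← sliceRight_emb12_mul_emb13,
    ← hw.map_comul_rTensor_antipode, sliceRight_map_comul, id_mul_antipode]
  exact hw.lTensor_counit_rTensor_antipode_eq_one

end

end IsWeakR

end OQApaper

theorem weakR_antipode_invariant_general (K : Type*) [Field K] (A B : Type*) [Ring A] [Ring B]
    [HopfAlgebra K A] [HopfAlgebra K B]
    (r : A ⊗[K] B) (hw : IsWeakR K r) :
    TensorProduct.map (HopfAlgebra.antipode (R := K)) (HopfAlgebra.antipode (R := K)) r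
      = r :=
  (left_inv_eq_right_inv hw.mul_rTensor_antipode hw.rTensor_antipode_mul_map_antipode).symm

/-- for Hopf algebras with bijective antipodes and a weak R-matrix `r`,
`(S_H ⊗ S_{H'})(r) = r`. -/
theorem weakR_antipode_invariant (K : Type*) [Field K] (A B : Type*) [Ring A] [Ring B]
    [HopfAlgebra K A] [HopfAlgebra K B]
    (hSA : Function.Bijective (HopfAlgebra.antipode (R := K) (A := A)))
    (hSB : Function.Bijective (HopfAlgebra.antipode (R := K) (A := B)))
    (r : A ⊗[K] B) (hw : IsWeakR K r) :
    TensorProduct.map (HopfAlgebra.antipode (R := K)) (HopfAlgebra.antipode (R := K)) r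
      = r :=
  weakR_antipode_invariant_general K A B r hw
end
end

section
/- If (H, p) and (H', p') are quasitriangular Hopf algebras and r = r_k ⊗ r^k ∈ H ⊗ H' is a weak R-matrix of (H, H'), then r_k r_s ⊗ r^k p'ⱼ ⊗ r^s p'ʲ = r_s r_k ⊗ p'ⱼ r^k ⊗ p'ʲ r^s in H ⊗ H' ⊗ H', where p' = p'ⱼ ⊗ p'ʲ and r = r_s ⊗ r^s is a second copy of r. -/
/-!
Flipping the last two tensor factors turns `(id ⊗ Δ)(r) = r₁₃ r₁₂` into
`r₁₂ r₁₃ = (id ⊗ Δ^cop)(r)`, and `p'` intertwines `Δ^cop` with `Δ`, so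
`r₁₂ r₁₃ p'₂₃ = p'₂₃ (id ⊗ Δ)(r) = p'₂₃ r₁₃ r₁₂`.
-/

open TensorProduct

noncomputable section

namespace OQApaper

def comm23 (K A B C : Type*) [Field K] [Ring A] [Ring B] [Ring C] [Algebra K A] [Algebra K B]
    [Algebra K C] : A ⊗[K] (B ⊗[K] C) ≃ₐ[K] A ⊗[K] (C ⊗[K] B) :=
  Algebra.TensorProduct.congr AlgEquiv.refl (Algebra.TensorProduct.comm K B C)

variable {K : Type*} [Field K]

section Embeddings

variable {A B C : Type*} [Ring A] [Ring B] [Ring C] [Algebra K A] [Algebra K B] [Algebra K C]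

theorem comm23_emb12 (x : A ⊗[K] B) : comm23 K A B C (emb12 K A B C x) = emb13 K A C B x := by
  induction x using TensorProduct.induction_on with
  | zero => simp
  | tmul a b => simp [comm23, emb12, emb13]
  | add x y hx hy => simp only [map_add, hx, hy]

theorem comm23_emb13 (x : A ⊗[K] C) : comm23 K A B C (emb13 K A B C x) = emb12 K A C B x := by
  induction x using TensorProduct.induction_on with
  | zero => simp
  | tmul a c => simp [comm23, emb12, emb13]
  | add x y hx hy => simp only [map_add, hx, hy]

end Embeddings

theorem comm23_map_comul_mul_emb23_of_almost_cocomm {A B : Type*} [Ring A] [Ring B]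
    [Algebra K A] [Algebra K B] [Coalgebra K B] {q : B ⊗[K] B}
    (hq : ∀ b : B, TensorProduct.comm K B B (Coalgebra.comul b) * q = q * Coalgebra.comul b)
    (x : A ⊗[K] B) :
    comm23 K A B B (TensorProduct.map LinearMap.id Coalgebra.comul x) * emb23 K A B B q =
      emb23 K A B B q * TensorProduct.map LinearMap.id Coalgebra.comul x := by
  induction x using TensorProduct.induction_on with
  | zero => simp
  | tmul a b =>
    have hflip : comm23 K A B B (a ⊗ₜ Coalgebra.comul b) =
        a ⊗ₜ TensorProduct.comm K B B (Coalgebra.comul b) := rfl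
    simp only [TensorProduct.map_tmul, LinearMap.id_coe, id_eq, hflip, emb23,
      Algebra.TensorProduct.includeRight_apply, Algebra.TensorProduct.tmul_mul_tmul,
      mul_one, one_mul, hq b]
  | add x y hx hy => simp only [map_add, add_mul, mul_add, hx, hy]

end OQApaper

open OQApaper

theorem weakR_cond4_general (K : Type*) [Field K] (A B : Type*) [Ring A] [Ring B]
    [HopfAlgebra K A] [HopfAlgebra K B]
    (p' : B ⊗[K] B) (hp' : IsQT K p')
    (r : A ⊗[K] B) (hw : IsWeakR K r) :
    emb12 K A B B r * emb13 K A B B r * emb23 K A B B p' =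
      emb23 K A B B p' * emb13 K A B B r * emb12 K A B B r := by
  have hflip : emb12 K A B B r * emb13 K A B B r =
      comm23 K A B B (TensorProduct.map LinearMap.id Coalgebra.comul r) := by
    rw [hw.comul_right, map_mul, comm23_emb13, comm23_emb12]
  rw [hflip, comm23_map_comul_mul_emb23_of_almost_cocomm hp'.almost_cocomm, hw.comul_right,
    mul_assoc]

/-- quasitriangular `(H,p)`, `(H',p')` and a weak R-matrix `r` of `(H,H')`
satisfy `r_k r_s ⊗ r^k p'ⱼ ⊗ r^s p'ʲ = r_s r_k ⊗ p'ⱼ r^k ⊗ p'ʲ r^s` (Eq. (3.4)). -/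
theorem weakR_cond4 (K : Type*) [Field K] (A B : Type*) [Ring A] [Ring B]
    [HopfAlgebra K A] [HopfAlgebra K B]
    (p : A ⊗[K] A) (p' : B ⊗[K] B) (hp : IsQT K p) (hp' : IsQT K p')
    (r : A ⊗[K] B) (hw : IsWeakR K r) :
    emb12 K A B B r * emb13 K A B B r * emb23 K A B B p' =
      emb23 K A B B p' * emb13 K A B B r * emb12 K A B B r :=
  weakR_cond4_general K A B p' hp' r hw
end
end

section
/- If (H, p) and (H', p') are quasitriangular Hopf algebras and r = r_k ⊗ r^k ∈ H ⊗ H' is a weak R-matrix of (H, H'), then pᵢ r_k ⊗ pⁱ r_s ⊗ r^k r^s = r_k pᵢ ⊗ r_s pⁱ ⊗ r^s r^k in H ⊗ H ⊗ H', where p = pᵢ ⊗ pⁱ and r = r_s ⊗ r^s is a second copy of r. -/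
open TensorProduct

noncomputable section

open OQApaper

/-!
Almost cocommutativity `Δ^cop(h) p = p Δ(h)` makes `p₁₂` intertwine `(Δ ⊗ id)(x)` with
`(Δ^cop ⊗ id)(x)` for every `x ∈ H ⊗ H'`. For `x = r` the first is `r₁₃ r₂₃` by the weak
R-matrix axiom, and the second is obtained from it by swapping the first two tensor factors,
which gives `r₂₃ r₁₃`.
-/

section Swap

variable (K : Type*) [Field K] (A B : Type*) [Ring A] [Ring B] [Algebra K A] [Algebra K B]

def swap12 : A ⊗[K] (A ⊗[K] B) ≃ₐ[K] A ⊗[K] (A ⊗[K] B) :=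
  (Algebra.TensorProduct.assoc K K K A A B).symm.trans
    ((Algebra.TensorProduct.congr (Algebra.TensorProduct.comm K A A) AlgEquiv.refl).trans
      (Algebra.TensorProduct.assoc K K K A A B))

variable {K A B}

@[simp]
lemma swap12_tmul (a a' : A) (b : B) :
    swap12 K A B (a ⊗ₜ[K] (a' ⊗ₜ[K] b)) = a' ⊗ₜ[K] (a ⊗ₜ[K] b) := by
  simp [swap12]

lemma swap12_assoc_tmul (y : A ⊗[K] A) (b : B) :
    swap12 K A B (TensorProduct.assoc K A A B (y ⊗ₜ[K] b)) =
      TensorProduct.assoc K A A B (TensorProduct.comm K A A y ⊗ₜ[K] b) := by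
  induction y with
  | zero => simp
  | tmul a a' => simp
  | add x y hx hy => simp only [add_tmul, map_add, hx, hy]

lemma swap12_emb13 (x : A ⊗[K] B) : swap12 K A B (emb13 K A A B x) = emb23 K A A B x := by
  induction x with
  | zero => simp
  | tmul a b => simp [emb13, emb23]
  | add x y hx hy => simp only [map_add, hx, hy]

lemma swap12_emb23 (x : A ⊗[K] B) : swap12 K A B (emb23 K A A B x) = emb13 K A A B x := by
  induction x with
  | zero => simp
  | tmul a b => simp [emb13, emb23]
  | add x y hx hy => simp only [map_add, hx, hy]

end Swap

section Emb12

variable {K : Type*} [Field K] {A B : Type*} [Ring A] [Ring B] [Algebra K A] [Algebra K B]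

lemma assoc_tmul_eq_emb12_mul (y : A ⊗[K] A) (b : B) :
    TensorProduct.assoc K A A B (y ⊗ₜ[K] b) = emb12 K A A B y * (1 ⊗ₜ[K] (1 ⊗ₜ[K] b)) := by
  induction y with
  | zero => simp
  | tmul a a' => simp [emb12]
  | add x y hx hy => simp only [add_tmul, map_add, add_mul, hx, hy]

lemma commute_emb12_one_tmul_one_tmul (y : A ⊗[K] A) (b : B) :
    Commute (emb12 K A A B y) (1 ⊗ₜ[K] (1 ⊗ₜ[K] b)) := by
  induction y with
  | zero => simp
  | tmul a a' => simp [emb12, Commute, SemiconjBy]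
  | add x y hx hy => rw [map_add]; exact hx.add_left hy

end Emb12

lemma OQApaper.IsQT.emb12_mul_assoc_map_comul {K : Type*} [Field K] {A B : Type*}
    [Ring A] [Ring B] [Bialgebra K A] [Algebra K B] {p : A ⊗[K] A} (hp : IsQT K p) (x : A ⊗[K] B) :
    emb12 K A A B p *
        TensorProduct.assoc K A A B (TensorProduct.map (Coalgebra.comul (R := K)) LinearMap.id x) =
      swap12 K A B (TensorProduct.assoc K A A B
          (TensorProduct.map (Coalgebra.comul (R := K)) LinearMap.id x)) *
        emb12 K A A B p := by
  induction x with
  | zero => simp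
  | tmul a b =>
    rw [TensorProduct.map_tmul, LinearMap.id_apply, swap12_assoc_tmul, assoc_tmul_eq_emb12_mul,
      assoc_tmul_eq_emb12_mul, ← mul_assoc, ← map_mul, ← hp.almost_cocomm a, map_mul,
      mul_assoc, mul_assoc, (commute_emb12_one_tmul_one_tmul p b).eq]
  | add x y hx hy => simp only [map_add, mul_add, add_mul, hx, hy]

theorem weakR_cond3_general (K : Type*) [Field K] (A B : Type*) [Ring A] [Ring B]
    [HopfAlgebra K A] [HopfAlgebra K B]
    (p : A ⊗[K] A) (hp : IsQT K p)
    (r : A ⊗[K] B) (hw : IsWeakR K r) :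
    emb12 K A A B p * emb13 K A A B r * emb23 K A A B r =
      emb23 K A A B r * emb13 K A A B r * emb12 K A A B p := by
  have hswap : swap12 K A B (emb13 K A A B r * emb23 K A A B r) =
      emb23 K A A B r * emb13 K A A B r := by
    rw [map_mul, swap12_emb13, swap12_emb23]
  rw [mul_assoc, ← hw.comul_left, hp.emb12_mul_assoc_map_comul, hw.comul_left, hswap]

/-- quasitriangular `(H,p)`, `(H',p')` and a weak R-matrix `r` of `(H,H')`
satisfy `pᵢ r_k ⊗ pⁱ r_s ⊗ r^k r^s = r_k pᵢ ⊗ r_s pⁱ ⊗ r^s r^k` (Eq. (3.3)). -/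
theorem weakR_cond3 (K : Type*) [Field K] (A B : Type*) [Ring A] [Ring B]
    [HopfAlgebra K A] [HopfAlgebra K B]
    (p : A ⊗[K] A) (p' : B ⊗[K] B) (hp : IsQT K p) (hp' : IsQT K p')
    (r : A ⊗[K] B) (hw : IsWeakR K r) :
    emb12 K A A B p * emb13 K A A B r * emb23 K A A B r =
      emb23 K A A B r * emb13 K A A B r * emb12 K A A B p :=
  weakR_cond3_general K A B p hp r hw
end
end

section
/- Let (H, p) and (H', p') be quasitriangular Hopf algebras with r ∈ H ⊗ H' a weak R-matrix of (H, H'), and write R = r⁻¹. Then D(R_n) r_k ⊗ U'(r^k) R^n = 1_H ⊗ 1_{H'} = r_k D(R_n) ⊗ R^n U'(r^k), where D = id_H and U' = S_{H'}⁻²; that is, (id ⊗ S_{H'}⁻²)(r) is a two-sided inverse of r⁻¹ in H ⊗ (H')^op. -/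
open TensorProduct

noncomputable section

open OQApaper

/-!
Slicing `(id ⊗ Δ)(r) = r₁₃ r₁₂` with `b ⊗ c ↦ f c * g b` turns the co-opposite convolution
`∑ f (b₍₂₎) g (b₍₁₎)` of two maps into the product `(id ⊗ f)(r) · (id ⊗ g)(r)`. Since `S⁻¹` is
the antipode of the co-opposite coalgebra, this gives `(id ⊗ ε)(r) = 1` and
`(id ⊗ S⁻¹)(r) · r = 1`, so `r⁻¹ = (id ⊗ S⁻¹)(r)`. Applying the algebra map
`id ⊗ S⁻¹ : H ⊗ H' → H ⊗ H'ᵐᵒᵖ` to `r r⁻¹ = 1 = r⁻¹ r` gives the claim.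
-/

namespace OQApaper

open Coalgebra HopfAlgebra

section CopConv

variable {K B V : Type*} [CommSemiring K] [Semiring V] [Algebra K V]

/-- Convolution for the co-opposite coalgebra: `copConv f g b = ∑ f (b₍₂₎) * g (b₍₁₎)`. -/
def copConv [AddCommMonoid B] [Module K B] [Coalgebra K B] (f g : B →ₗ[K] V) : B →ₗ[K] V :=
  LinearMap.mul' K V ∘ₗ map f g ∘ₗ (TensorProduct.comm K B B).toLinearMap ∘ₗ comul

lemma copConv_apply [AddCommMonoid B] [Module K B] [Coalgebra K B] (f g : B →ₗ[K] V) {b : B}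
    {ι : Type*} (𝓡 : Repr K b ι) :
    copConv f g b = ∑ i ∈ 𝓡.index, f (𝓡.right i) * g (𝓡.left i) := by
  simp [copConv, ← 𝓡.eq, map_sum, LinearMap.mul'_apply]

lemma copConv_id_algebraMap_counit [Semiring B] [Bialgebra K B] :
    copConv LinearMap.id (Algebra.linearMap K B ∘ₗ counit) = LinearMap.id := by
  ext b
  rw [copConv_apply _ _ (ℛ K b)]
  simpa [Algebra.algebraMap_eq_smul_one] using sum_counit_smul (ℛ K b)

variable [Semiring B] [HopfAlgebra K B] {T : B →ₗ[K] B}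

lemma antipodeInv_mul (hl : Function.LeftInverse T (antipode K))
    (hr : Function.RightInverse T (antipode K)) (a b : B) : T (a * b) = T b * T a := by
  conv_lhs => rw [← hr a, ← hr b, ← antipode_mul_antidistrib, hl]

lemma antipodeInv_one (hl : Function.LeftInverse T (antipode K)) : T 1 = 1 := by
  simpa using hl 1

lemma copConv_antipodeInv_id (hl : Function.LeftInverse T (antipode K))
    (hr : Function.RightInverse T (antipode K)) :
    copConv T LinearMap.id = Algebra.linearMap K B ∘ₗ counit := by
  ext b
  apply hl.injective
  simp only [copConv_apply _ _ (ℛ K b), map_sum, antipode_mul_antidistrib, hr _,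
    LinearMap.id_apply, sum_antipode_mul_eq_algebraMap_counit]
  simp [Algebra.algebraMap_eq_smul_one]

def antipodeInvAlgHomOp (hl : Function.LeftInverse T (antipode K))
    (hr : Function.RightInverse T (antipode K)) : B →ₐ[K] Bᵐᵒᵖ :=
  .ofLinearMap ((MulOpposite.opLinearEquiv K).toLinearMap ∘ₗ T)
    (by simp [antipodeInv_one hl])
    (fun a b => by simp [antipodeInv_mul hl hr])

lemma antipodeInvAlgHomOp_apply (hl : Function.LeftInverse T (antipode K))
    (hr : Function.RightInverse T (antipode K)) (b : B) :
    antipodeInvAlgHomOp hl hr b = MulOpposite.op (T b) :=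
  rfl

end CopConv

section WeakR

variable {K A B V : Type*} [Field K] [Ring A] [Ring B] [Semiring V] [Algebra K V]

lemma map_mul'_comm_emb13_mul_emb12 [Algebra K A] [Algebra K B] (f g : B →ₗ[K] V)
    (x y : A ⊗[K] B) :
    map LinearMap.id (LinearMap.mul' K V ∘ₗ map f g ∘ₗ (TensorProduct.comm K B B).toLinearMap)
        (emb13 K A B B x * emb12 K A B B y) =
      map LinearMap.id f x * map LinearMap.id g y := by
  have key : map LinearMap.id
        (LinearMap.mul' K V ∘ₗ map f g ∘ₗ (TensorProduct.comm K B B).toLinearMap) ∘ₗ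
        LinearMap.mul' K (A ⊗[K] (B ⊗[K] B)) ∘ₗ
        map (emb13 K A B B).toLinearMap (emb12 K A B B).toLinearMap =
      LinearMap.mul' K (A ⊗[K] V) ∘ₗ map (map LinearMap.id f) (map LinearMap.id g) := by
    ext a b a' b'
    simp [emb13, emb12, LinearMap.mul'_apply]
  simpa [LinearMap.mul'_apply] using LinearMap.congr_fun key (x ⊗ₜ[K] y)

lemma map_antipodeInvAlgHomOp [Algebra K A] [HopfAlgebra K B] {T : B →ₗ[K] B}
    (hl : Function.LeftInverse T (antipode K)) (hr : Function.RightInverse T (antipode K))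
    (x : A ⊗[K] B) :
    Algebra.TensorProduct.map (AlgHom.id K A) (antipodeInvAlgHomOp hl hr) x =
      opify K A B (map LinearMap.id T x) := by
  have h : (Algebra.TensorProduct.map (AlgHom.id K A) (antipodeInvAlgHomOp hl hr)).toLinearMap =
      opify K A B ∘ₗ map LinearMap.id T := by
    ext a b
    simp [opify, antipodeInvAlgHomOp_apply]
  exact LinearMap.congr_fun h x

variable [Bialgebra K A]

lemma IsWeakR.map_copConv [Bialgebra K B] {r : A ⊗[K] B} (hw : IsWeakR K r)
    (f g : B →ₗ[K] V) :
    map LinearMap.id (copConv f g) r = map LinearMap.id f r * map LinearMap.id g r := by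
  have hsplit : map (LinearMap.id (M := A)) (copConv f g) =
      map LinearMap.id
          (LinearMap.mul' K V ∘ₗ map f g ∘ₗ (TensorProduct.comm K B B).toLinearMap) ∘ₗ
        map LinearMap.id comul := by
    rw [← map_comp]
    rfl
  rw [hsplit, LinearMap.comp_apply, hw.comul_right, map_mul'_comm_emb13_mul_emb12]

lemma IsWeakR.map_algebraMap_counit [Bialgebra K B] {r : A ⊗[K] B} (hw : IsWeakR K r) :
    map LinearMap.id (Algebra.linearMap K B ∘ₗ counit) r = 1 := by
  refine hw.isUnit.mul_eq_left.1 ?_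
  simpa [copConv_id_algebraMap_counit] using
    (hw.map_copConv LinearMap.id (Algebra.linearMap K B ∘ₗ counit)).symm

lemma IsWeakR.map_antipodeInv_mul_self [HopfAlgebra K B] {r : A ⊗[K] B} (hw : IsWeakR K r)
    {T : B →ₗ[K] B} (hl : Function.LeftInverse T (antipode K))
    (hr : Function.RightInverse T (antipode K)) :
    map LinearMap.id T r * r = 1 := by
  simpa [copConv_antipodeInv_id hl hr, hw.map_algebraMap_counit] using
    (hw.map_copConv T LinearMap.id).symm

end WeakR

end OQApaper

theorem weakR_op_inverse_general (K : Type*) [Field K] (A B : Type*) [Ring A] [Ring B]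
    [HopfAlgebra K A] [HopfAlgebra K B]
    (r rinv : A ⊗[K] B) (h1 : r * rinv = 1)
    (hw : IsWeakR K r)
    (S'inv : B →ₗ[K] B)
    (hS'1 : ∀ b : B, S'inv (HopfAlgebra.antipode (R := K) b) = b)
    (hS'2 : ∀ b : B, HopfAlgebra.antipode (R := K) (S'inv b) = b) :
    opify K A B rinv *
        opify K A B (TensorProduct.map LinearMap.id (S'inv ∘ₗ S'inv) r) = 1 ∧
    opify K A B (TensorProduct.map LinearMap.id (S'inv ∘ₗ S'inv) r) *
        opify K A B rinv = 1 := by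
  have hinv_mul : map LinearMap.id S'inv r * r = 1 := hw.map_antipodeInv_mul_self hS'1 hS'2
  have hrinv : map LinearMap.id S'inv r = rinv := left_inv_eq_right_inv hinv_mul h1
  set Φ := Algebra.TensorProduct.map (AlgHom.id K A) (antipodeInvAlgHomOp hS'1 hS'2)
  have hΦr : Φ r = opify K A B rinv := by
    rw [map_antipodeInvAlgHomOp, hrinv]
  have hΦrinv : Φ rinv = opify K A B (map LinearMap.id (S'inv ∘ₗ S'inv) r) := by
    rw [map_antipodeInvAlgHomOp, ← hrinv, ← LinearMap.comp_apply (map LinearMap.id S'inv),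
      ← map_comp, LinearMap.id_comp]
  rw [hrinv] at hinv_mul
  rw [← hΦr, ← hΦrinv, ← map_mul, ← map_mul, h1, hinv_mul, map_one]
  exact ⟨rfl, rfl⟩

/-- for quasitriangular Hopf algebras and a weak R-matrix `r`,
`(id ⊗ S'⁻²)(r)` is a two-sided inverse of `r⁻¹` in `H ⊗ H'^op` (condition (3.1) with
`D = id`, `U' = S'⁻²`). -/
theorem weakR_op_inverse (K : Type*) [Field K] (A B : Type*) [Ring A] [Ring B]
    [HopfAlgebra K A] [HopfAlgebra K B]
    (p : A ⊗[K] A) (p' : B ⊗[K] B) (hp : IsQT K p) (hp' : IsQT K p')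
    (r rinv : A ⊗[K] B) (h1 : r * rinv = 1) (h2 : rinv * r = 1)
    (hw : IsWeakR K r)
    (S'inv : B →ₗ[K] B)
    (hS'1 : ∀ b : B, S'inv (HopfAlgebra.antipode (R := K) b) = b)
    (hS'2 : ∀ b : B, HopfAlgebra.antipode (R := K) (S'inv b) = b) :
    opify K A B rinv *
        opify K A B (TensorProduct.map LinearMap.id (S'inv ∘ₗ S'inv) r) = 1 ∧
    opify K A B (TensorProduct.map LinearMap.id (S'inv ∘ₗ S'inv) r) *
        opify K A B rinv = 1 :=
  weakR_op_inverse_general K A B r rinv h1 hw S'inv hS'1 hS'2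
end
end

section
/- If (H, H', p, p', r, D, U, D', U') is an OQA nonuple, then (H, H', p, p', r, U, D, U', D') is also an OQA nonuple. -/
/-!
Only condition (1) is not visibly symmetric under `D ↔ U`, `D' ↔ U'`. Apply to it the algebra
map `U D⁻¹ ⊗ id` of `H ⊗ H'ᵒᵖ`, which sends `(D ⊗ id)(r⁻¹)` to `(U ⊗ id)(r⁻¹)`. As `r` is fixed
by `D ⊗ D'` and by `U ⊗ U'`, we have `(id ⊗ U')(r) = (U⁻¹ ⊗ id)(r)` and
`(id ⊗ D')(r) = (D⁻¹ ⊗ id)(r)`; since `D` and `U` commute, the map therefore sends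
`(id ⊗ U')(r)` to `(U D⁻¹ U⁻¹ ⊗ id)(r) = (id ⊗ D')(r)`.
-/

open TensorProduct

noncomputable section

open OQApaper

namespace OQApaper

open Algebra.TensorProduct (map)

section Twist

variable {R A B : Type*} [CommSemiring R] [Semiring A] [Semiring B] [Algebra R A] [Algebra R B]

theorem map_map_apply {C D E F : Type*} [Semiring C] [Semiring D] [Semiring E] [Semiring F]
    [Algebra R C] [Algebra R D] [Algebra R E] [Algebra R F] (f₂ : C →ₐ[R] E) (f₁ : A →ₐ[R] C)
    (g₂ : D →ₐ[R] F) (g₁ : B →ₐ[R] D) (x : A ⊗[R] B) :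
    map f₂ g₂ (map f₁ g₁ x) = map (f₂.comp f₁) (g₂.comp g₁) x := by
  rw [Algebra.TensorProduct.map_comp, AlgHom.comp_apply]

theorem map_id_eq_map_symm_of_map_eq_self {σ : A ≃ₐ[R] A} {σ' : B ≃ₐ[R] B} {r : A ⊗[R] B}
    (h : map σ.toAlgHom σ'.toAlgHom r = r) :
    map (AlgHom.id R A) σ'.toAlgHom r = map σ.symm.toAlgHom (AlgHom.id R B) r := by
  conv_rhs => rw [← h]
  rw [map_map_apply]
  congr 2
  ext
  simp

theorem map_symm_trans_map (σ τ : A ≃ₐ[R] A) (x : A ⊗[R] B) :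
    map (σ.symm.trans τ).toAlgHom (AlgHom.id R B) (map σ.toAlgHom (AlgHom.id R B) x) =
      map τ.toAlgHom (AlgHom.id R B) x := by
  rw [map_map_apply]
  congr 2
  ext
  simp

theorem map_symm_trans_map_id_of_map_eq_self {σ τ : A ≃ₐ[R] A} {σ' τ' : B ≃ₐ[R] B}
    {r : A ⊗[R] B} (hcomm : ∀ a, σ (τ a) = τ (σ a))
    (hσ : map σ.toAlgHom σ'.toAlgHom r = r) (hτ : map τ.toAlgHom τ'.toAlgHom r = r) :
    map (σ.symm.trans τ).toAlgHom (AlgHom.id R B) (map (AlgHom.id R A) τ'.toAlgHom r) =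
      map (AlgHom.id R A) σ'.toAlgHom r := by
  rw [map_id_eq_map_symm_of_map_eq_self hσ, map_id_eq_map_symm_of_map_eq_self hτ,
    map_map_apply]
  congr 2
  ext a
  apply σ.injective
  simp [hcomm]

end Twist

theorem opify_map_id {K A B C : Type*} [Field K] [Ring A] [Ring B] [Ring C]
    [Algebra K A] [Algebra K B] [Algebra K C] (f : A →ₐ[K] C) (x : A ⊗[K] B) :
    opify K C B (map f (AlgHom.id K B) x) = map f (AlgHom.id K Bᵐᵒᵖ) (opify K A B x) := by
  induction x using TensorProduct.induction_on with
  | zero => simp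
  | tmul a b => simp [opify]
  | add x y hx hy => simp only [map_add, hx, hy]

end OQApaper

/-- Remark 3.2(2): if `(H, H', p, p', r, D, U, D', U')` is an OQA
nonuple, then so is `(H, H', p, p', r, U, D, U', D')`. -/
theorem nonuple_swap (K : Type*) [Field K] (A B : Type*) [Ring A] [Ring B]
    [Algebra K A] [Algebra K B]
    (p pinv : A ⊗[K] A) (p' p'inv : B ⊗[K] B) (r rinv : A ⊗[K] B)
    (σ τ : A ≃ₐ[K] A) (σ' τ' : B ≃ₐ[K] B)
    (hn : IsOQANonuple K p pinv p' p'inv r rinv σ τ σ' τ') :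
    IsOQANonuple K p pinv p' p'inv r rinv τ σ τ' σ' := by
  set ψ := Algebra.TensorProduct.map (σ.symm.trans τ).toAlgHom (AlgHom.id K Bᵐᵒᵖ)
  have hrinv : ψ (opify K A B (Algebra.TensorProduct.map σ.toAlgHom (AlgHom.id K B) rinv)) =
      opify K A B (Algebra.TensorProduct.map τ.toAlgHom (AlgHom.id K B) rinv) := by
    rw [← opify_map_id, map_symm_trans_map]
  have hr : ψ (opify K A B (Algebra.TensorProduct.map (AlgHom.id K A) τ'.toAlgHom r)) =
      opify K A B (Algebra.TensorProduct.map (AlgHom.id K A) σ'.toAlgHom r) := by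
    rw [← opify_map_id,
      map_symm_trans_map_id_of_map_eq_self hn.comm_auto hn.map_sigma hn.map_tau]
  refine ⟨fun a => (hn.comm_auto a).symm, fun b => (hn.comm_auto' b).symm,
    hn.p_mul_inv, hn.p_inv_mul, hn.p'_mul_inv, hn.p'_inv_mul, hn.r_mul_inv, hn.r_inv_mul,
    ?_, ?_, hn.map_tau, hn.map_sigma, hn.cond3, hn.cond4⟩
  · rw [← hrinv, ← hr, ← map_mul, hn.op_mul_inv, map_one]
  · rw [← hrinv, ← hr, ← map_mul, hn.op_inv_mul, map_one]
end
end

section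
/- Let K be a field, ν ∈ K, and H = K⟨g, x⟩ the 4-dimensional algebra with relations g² = 1, x² = 0, gx = −xg. Let D = id_H and U the algebra automorphism with U(g) = g, U(x) = −x. Then D and U commute and (H, p, D, U) is an oriented quantum algebra, where p = ½(1⊗1 + 1⊗g + g⊗1 − g⊗g) + (ν/2)(x⊗x + x⊗gx + gx⊗gx − gx⊗x). -/
/-!
With `e = ½(1⊗1 + 1⊗g + g⊗1 - g⊗g)`, the R-matrix of the group algebra of `⟨g⟩ ≅ ℤ/2`, and
`N = x ⊗ gx`, the element `p` factors as `e (1 + νN)` with `e² = 1` and `N² = 0`, so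
`p⁻¹ = (1 - νN) e`. Since `U` fixes `g` and negates `x`, `(U ⊗ U)(p) = p` and `(id ⊗ U)(p)` is
the same element with `-ν` in place of `ν`. What remains, the inverse in `H ⊗ Hᵐᵒᵖ` and the
Yang–Baxter equation, is a finite computation with the multiplication table of `1, g, x, gx`.
-/

open TensorProduct

noncomputable section

open OQApaper

namespace OQApaper

section Relations

variable {H : Type*} [Ring H]

structure IsSweedlerPair (g x : H) : Prop where
  g_mul_g : g * g = 1
  x_mul_x : x * x = 0
  g_mul_x : g * x = -(x * g)

namespace IsSweedlerPair

variable {g x : H}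

theorem x_mul_g (h : IsSweedlerPair g x) : x * g = -(g * x) := by rw [h.g_mul_x, neg_neg]

theorem g_mul_gx (h : IsSweedlerPair g x) : g * (g * x) = x := by
  rw [← mul_assoc, h.g_mul_g, one_mul]

theorem gx_mul_g (h : IsSweedlerPair g x) : g * x * g = -x := by
  rw [mul_assoc, h.x_mul_g, mul_neg, h.g_mul_gx]

theorem gx_mul_x (h : IsSweedlerPair g x) : g * x * x = 0 := by
  rw [mul_assoc, h.x_mul_x, mul_zero]

theorem x_mul_gx (h : IsSweedlerPair g x) : x * (g * x) = 0 := by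
  rw [← mul_assoc, h.x_mul_g, neg_mul, mul_assoc, h.x_mul_x, mul_zero, neg_zero]

theorem gx_mul_gx (h : IsSweedlerPair g x) : g * x * (g * x) = 0 := by
  rw [mul_assoc, h.x_mul_gx, mul_zero]

end IsSweedlerPair

end Relations

section Unipotent

variable {R : Type*} [Ring R] {u n : R}

theorem mul_one_add_mul_one_sub_mul (hu : u * u = 1) (hn : n * n = 0) :
    u * (1 + n) * ((1 - n) * u) = 1 :=
  calc u * (1 + n) * ((1 - n) * u) = u * (1 - n * n) * u := by noncomm_ring
    _ = 1 := by rw [hn, sub_zero, mul_one, hu]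

theorem one_sub_mul_mul_mul_one_add (hu : u * u = 1) (hn : n * n = 0) :
    (1 - n) * u * (u * (1 + n)) = 1 :=
  calc (1 - n) * u * (u * (1 + n)) = (1 - n) * (u * u) * (1 + n) := by noncomm_ring
    _ = 1 - n * n := by rw [hu, mul_one]; noncomm_ring
    _ = 1 := by rw [hn, sub_zero]

end Unipotent

section RMatrix

variable (K : Type*) [Field K] {H : Type*} [Ring H] [Algebra K H]

def groupR (g : H) : H ⊗[K] H :=
  (2 : K)⁻¹ • ((1 : H) ⊗ₜ (1 : H) + (1 : H) ⊗ₜ g + g ⊗ₜ (1 : H) - g ⊗ₜ g)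

def sweedlerR (ν : K) (g x : H) : H ⊗[K] H :=
  groupR K g * (1 + ν • x ⊗ₜ (g * x))

def sweedlerRInv (ν : K) (g x : H) : H ⊗[K] H :=
  (1 - ν • x ⊗ₜ (g * x)) * groupR K g

variable {K}

theorem groupR_mul_self (h2 : (2 : K) ≠ 0) {g : H} (hg : g * g = 1) :
    groupR K g * groupR K g = 1 := by
  simp only [groupR, smul_mul_smul, add_mul, mul_add, sub_mul, mul_sub,
    Algebra.TensorProduct.tmul_mul_tmul, hg, one_mul, mul_one, Algebra.TensorProduct.one_def]
  match_scalars <;> field_simp <;> ring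

theorem smul_tmul_mul_self_eq_zero (ν : K) {a : H} (ha : a * a = 0) (b : H) :
    (ν • a ⊗ₜ[K] b) * (ν • a ⊗ₜ[K] b) = 0 := by
  rw [smul_mul_smul, Algebra.TensorProduct.tmul_mul_tmul, ha, zero_tmul, smul_zero]

theorem sweedlerR_mul_sweedlerRInv (h2 : (2 : K) ≠ 0) (ν : K) {g x : H} (hg : g * g = 1)
    (hx : x * x = 0) : sweedlerR K ν g x * sweedlerRInv K ν g x = 1 :=
  mul_one_add_mul_one_sub_mul (groupR_mul_self h2 hg) (smul_tmul_mul_self_eq_zero ν hx _)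

theorem sweedlerRInv_mul_sweedlerR (h2 : (2 : K) ≠ 0) (ν : K) {g x : H} (hg : g * g = 1)
    (hx : x * x = 0) : sweedlerRInv K ν g x * sweedlerR K ν g x = 1 :=
  one_sub_mul_mul_mul_one_add (groupR_mul_self h2 hg) (smul_tmul_mul_self_eq_zero ν hx _)

theorem sweedlerR_eq (ν : K) {g : H} (hg : g * g = 1) (x : H) :
    sweedlerR K ν g x =
      (2 : K)⁻¹ • ((1 : H) ⊗ₜ[K] (1 : H) + (1 : H) ⊗ₜ[K] g + g ⊗ₜ[K] (1 : H) - g ⊗ₜ[K] g) +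
        (ν / 2) • (x ⊗ₜ[K] x + x ⊗ₜ[K] (g * x) + (g * x) ⊗ₜ[K] (g * x) -
          (g * x) ⊗ₜ[K] x) := by
  have hggx : g * (g * x) = x := by rw [← mul_assoc, hg, one_mul]
  simp only [sweedlerR, groupR, mul_add, mul_one, smul_mul_smul, sub_mul, add_mul,
    Algebra.TensorProduct.tmul_mul_tmul, one_mul, hggx]
  match_scalars <;> ring

theorem sweedlerRInv_eq (ν : K) {g x : H} (h : IsSweedlerPair g x) :
    sweedlerRInv K ν g x =
      (2 : K)⁻¹ • ((1 : H) ⊗ₜ[K] (1 : H) + (1 : H) ⊗ₜ[K] g + g ⊗ₜ[K] (1 : H) - g ⊗ₜ[K] g) +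
        (ν / 2) • (x ⊗ₜ[K] x - x ⊗ₜ[K] (g * x) + (g * x) ⊗ₜ[K] (g * x) +
          (g * x) ⊗ₜ[K] x) := by
  simp only [sweedlerRInv, groupR, sub_mul, one_mul, smul_mul_smul, mul_add, mul_sub,
    Algebra.TensorProduct.tmul_mul_tmul, mul_one, h.x_mul_g, h.gx_mul_g, tmul_neg, neg_tmul]
  match_scalars <;> ring

theorem map_groupR (φ ψ : H →ₐ[K] H) {g : H} (hφ : φ g = g) (hψ : ψ g = g) :
    Algebra.TensorProduct.map φ ψ (groupR K g) = groupR K g := by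
  simp only [groupR, map_smul, map_sub, map_add, Algebra.TensorProduct.map_tmul, map_one, hφ, hψ]

theorem map_sweedlerR (ν c : K) (φ ψ : H →ₐ[K] H) {g x : H} (hφ : φ g = g) (hψ : ψ g = g)
    (hx : φ x ⊗ₜ[K] (g * ψ x) = c • x ⊗ₜ[K] (g * x)) :
    Algebra.TensorProduct.map φ ψ (sweedlerR K ν g x) = sweedlerR K (c * ν) g x := by
  rw [sweedlerR, map_mul, map_groupR φ ψ hφ hψ, map_add, map_one, map_smul,
    Algebra.TensorProduct.map_tmul, map_mul, hψ, hx, smul_smul, mul_comm ν, sweedlerR]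

theorem opify_tmul (a b : H) : opify K H H (a ⊗ₜ b) = a ⊗ₜ MulOpposite.op b := rfl

theorem opify_sweedlerRInv_opify_sweedlerR_neg (h2 : (2 : K) ≠ 0) (ν : K) {g x : H}
    (h : IsSweedlerPair g x) :
    opify K H H (sweedlerRInv K ν g x) * opify K H H (sweedlerR K (-ν) g x) = 1 ∧
      opify K H H (sweedlerR K (-ν) g x) * opify K H H (sweedlerRInv K ν g x) = 1 := by
  simp only [sweedlerRInv_eq ν h, sweedlerR_eq (-ν) h.g_mul_g, map_add, map_sub, map_smul,
    opify_tmul]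
  constructor
  all_goals
    simp only [smul_add, smul_sub, mul_add, add_mul, sub_mul, mul_sub, smul_mul_smul,
      Algebra.TensorProduct.tmul_mul_tmul, ← MulOpposite.op_mul]
    simp only [h.g_mul_g, h.x_mul_x, h.x_mul_g, h.g_mul_gx, h.gx_mul_g, h.gx_mul_x, h.x_mul_gx,
      h.gx_mul_gx, one_mul, mul_one, MulOpposite.op_neg, MulOpposite.op_zero, MulOpposite.op_one,
      tmul_zero, tmul_neg, neg_tmul, smul_zero, smul_neg, add_zero, sub_zero, sub_neg_eq_add,
      Algebra.TensorProduct.one_def]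
    match_scalars <;> field_simp <;> ring

set_option maxHeartbeats 1000000 in
theorem sweedlerR_qybe (ν : K) {g x : H} (h : IsSweedlerPair g x) :
    emb12 K H H H (sweedlerR K ν g x) * emb13 K H H H (sweedlerR K ν g x) *
        emb23 K H H H (sweedlerR K ν g x) =
      emb23 K H H H (sweedlerR K ν g x) * emb13 K H H H (sweedlerR K ν g x) *
        emb12 K H H H (sweedlerR K ν g x) := by
  rw [sweedlerR_eq ν h.g_mul_g]
  simp only [emb12, emb13, emb23, map_add, map_sub, map_smul,
    Algebra.TensorProduct.map_tmul, AlgHom.coe_id, id_eq,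
    Algebra.TensorProduct.includeLeft_apply, Algebra.TensorProduct.includeRight_apply]
  simp only [smul_add, smul_sub, mul_add, add_mul, sub_mul, mul_sub, smul_mul_assoc,
    mul_smul_comm, smul_smul, Algebra.TensorProduct.tmul_mul_tmul]
  simp only [h.g_mul_g, h.x_mul_x, h.x_mul_g, h.x_mul_gx, h.gx_mul_x, h.gx_mul_gx, h.g_mul_gx,
    h.gx_mul_g, one_mul, mul_one, tmul_zero, zero_tmul, tmul_neg, neg_tmul, smul_zero, smul_neg,
    add_zero, neg_zero, neg_neg, sub_neg_eq_add, sub_zero]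
  match_scalars <;> ring

end RMatrix

end OQApaper

theorem sweedler_oqa_general (K : Type*) [Field K] (h2 : (2 : K) ≠ 0) (ν : K)
    (H : Type*) [Ring H] [Algebra K H] (g x : H)
    (hg : g * g = 1) (hx : x * x = 0) (hgx : g * x = -(x * g))
    (U : H ≃ₐ[K] H) (hUg : U g = g) (hUx : U x = -x) :
    ∃ pinv,
      IsOQA K
        ((2 : K)⁻¹ • ((1 : H) ⊗ₜ[K] (1 : H) + (1 : H) ⊗ₜ[K] g + g ⊗ₜ[K] (1 : H) -
            g ⊗ₜ[K] g) +
          (ν / 2) • (x ⊗ₜ[K] x + x ⊗ₜ[K] (g * x) + (g * x) ⊗ₜ[K] (g * x) -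
            (g * x) ⊗ₜ[K] x))
        pinv AlgEquiv.refl U := by
  have h : IsSweedlerPair g x := ⟨hg, hx, hgx⟩
  have hD (r : H ⊗[K] H) :
      Algebra.TensorProduct.map (AlgEquiv.refl : H ≃ₐ[K] H).toAlgHom (AlgHom.id K H) r = r := by
    rw [AlgEquiv.refl_toAlgHom, Algebra.TensorProduct.map_id, AlgHom.id_apply]
  have hidU : Algebra.TensorProduct.map (AlgHom.id K H) U.toAlgHom (sweedlerR K ν g x) =
      sweedlerR K (-ν) g x := by
    simpa using map_sweedlerR ν (-1) (AlgHom.id K H) U.toAlgHom rfl hUg (by simp [hUx, tmul_neg])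
  have hUU : Algebra.TensorProduct.map U.toAlgHom U.toAlgHom (sweedlerR K ν g x) =
      sweedlerR K ν g x := by
    simpa using map_sweedlerR ν 1 U.toAlgHom U.toAlgHom hUg hUg (by simp [hUx, tmul_neg, neg_tmul])
  obtain ⟨hop, hop'⟩ := opify_sweedlerRInv_opify_sweedlerR_neg h2 ν h
  rw [← sweedlerR_eq ν hg x]
  exact ⟨sweedlerRInv K ν g x, fun _ => rfl, sweedlerR_mul_sweedlerRInv h2 ν hg hx,
    sweedlerRInv_mul_sweedlerR h2 ν hg hx, by rwa [hD, hidU], by rwa [hD, hidU], hD _, hUU,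
    sweedlerR_qybe ν h⟩

/-- Example 4.5, first part: on Sweedler's four-dimensional algebra
`H = K⟨g, x⟩` with `g² = 1`, `x² = 0`, `gx = -xg`, the element
`p = ½(1⊗1 + 1⊗g + g⊗1 - g⊗g) + (ν/2)(x⊗x + x⊗gx + gx⊗gx - gx⊗x)` together with
`D = id` and the automorphism `U` with `U(g) = g`, `U(x) = -x` is an OQA. -/
theorem sweedler_oqa (K : Type*) [Field K] (h2 : (2 : K) ≠ 0) (ν : K)
    (H : Type*) [Ring H] [Algebra K H] (g x : H)
    (hg : g * g = 1) (hx : x * x = 0) (hgx : g * x = -(x * g))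
    (hgen : Algebra.adjoin K ({g, x} : Set H) = ⊤)
    (U : H ≃ₐ[K] H) (hUg : U g = g) (hUx : U x = -x) :
    ∃ pinv,
      IsOQA K
        ((2 : K)⁻¹ • ((1 : H) ⊗ₜ[K] (1 : H) + (1 : H) ⊗ₜ[K] g + g ⊗ₜ[K] (1 : H) -
            g ⊗ₜ[K] g) +
          (ν / 2) • (x ⊗ₜ[K] x + x ⊗ₜ[K] (g * x) + (g * x) ⊗ₜ[K] (g * x) -
            (g * x) ⊗ₜ[K] x))
        pinv AlgEquiv.refl U :=
  sweedler_oqa_general K h2 ν H g x hg hx hgx U hUg hUx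
end
end

section
/- Let K be a field with char K ≠ 2, H = K⟨g, x⟩ with g² = 1, x² = 0, gx = −xg, and H' = K⟨t⟩ with t² = 1. Let p = ½(1⊗1 + 1⊗g + g⊗1 − g⊗g) + (ν/2)(x⊗x + x⊗gx + gx⊗gx − gx⊗x) ∈ H ⊗ H, p' = ½(1⊗1 + 1⊗t + t⊗1 − t⊗t) ∈ H' ⊗ H', and r = ½(1⊗1 + 1⊗t + g⊗1 − g⊗t) ∈ H ⊗ H'. With D = id_H, U determined by U(g) = g, U(x) = −x, and D' = U' = id_{H'}, the tuple (H, H', p, p', r, D, U, D', U') is an OQA nonuple. -/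
open TensorProduct

noncomputable section

open OQApaper

/-!
With `R(u, v) = ½(1 + v + u − uv)`, the elements are `r = R(g⊗1, 1⊗t)`, `p' = R(t⊗1, 1⊗t)` and
`p = R(g⊗1, 1⊗g) + cX` with `X = x⊗x` and `c` a polynomial in `g⊗1, 1⊗g`. For commuting
involutions `R(u, v) = 1 − 2ef` with the commuting idempotents `e = (1−u)/2`, `f = (1−v)/2`, so
`R(u, v)² = 1`; moreover `R(u, v) R(u', v) = R(uu', v)` when `v² = 1` and `u'` commutes with `v`.
The factors `r₁₂, r₁₃, p'₂₃` are such elements in the pairwise commuting involutions `g₁, t₂, t₃`,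
so they commute, which gives the condition on `p'`; and `r₁₃ r₂₃ = r₂₃ r₁₃ = R(g₁g₂, t₃)`, so the
condition on `p` holds because `p` commutes with `g⊗g`. Finally `X` anticommutes with `g⊗1` and
`1⊗g` and `X² = 0`, so `X w X = 0` for every polynomial `w` in them; hence `(cX) R (cX) = 0`,
which makes `p` invertible with inverse `R − R(cX)R`, and `X` commutes with `g⊗g`.
-/

namespace OQApaper

section Involutions

variable {K A : Type*} [Field K] [Ring A] [Algebra K A]

variable (K) in
/-- For commuting involutions this is the image of the R-matrix `½(1⊗1 + 1⊗σ + σ⊗1 − σ⊗σ)` of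
the group algebra of `ℤ/2 = ⟨σ⟩` under `σ⊗1 ↦ u`, `1⊗σ ↦ v`. -/
def z2RMatrix (u v : A) : A := (2 : K)⁻¹ • (1 + v + u - u * v)

theorem map_z2RMatrix {B : Type*} [Ring B] [Algebra K B] (f : A →ₐ[K] B) (u v : A) :
    f (z2RMatrix K u v) = z2RMatrix K (f u) (f v) := by
  simp [z2RMatrix]

theorem z2RMatrix_mem {S : Subalgebra K A} {u v : A} (hu : u ∈ S) (hv : v ∈ S) :
    z2RMatrix K u v ∈ S :=
  S.smul_mem (S.sub_mem (S.add_mem (S.add_mem S.one_mem hv) hu) (S.mul_mem hu hv)) _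

theorem _root_.Commute.z2RMatrix_right {a u v : A} (hu : Commute a u) (hv : Commute a v) :
    Commute a (z2RMatrix K u v) :=
  ((((Commute.one_right a).add_right hv).add_right hu).sub_right (hu.mul_right hv)).smul_right _

theorem _root_.Commute.z2RMatrix_left {a u v : A} (hu : Commute u a) (hv : Commute v a) :
    Commute (z2RMatrix K u v) a :=
  (hu.symm.z2RMatrix_right hv.symm).symm

theorem _root_.Commute.z2RMatrix {u v u' v' : A} (huu' : Commute u u') (huv' : Commute u v')
    (hvu' : Commute v u') (hvv' : Commute v v') :
    Commute (z2RMatrix K u v) (z2RMatrix K u' v') :=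
  (huu'.z2RMatrix_right huv').z2RMatrix_left (hvu'.z2RMatrix_right hvv')

theorem z2RMatrix_mul_z2RMatrix (h2 : (2 : K) ≠ 0) {u u' v : A} (hv : v * v = 1)
    (hu'v : Commute u' v) :
    z2RMatrix K u v * z2RMatrix K u' v = z2RMatrix K (u * u') v := by
  have hvu' : v * u' = u' * v := hu'v.symm.eq
  have hvu'' : ∀ y : A, v * (u' * y) = u' * (v * y) := fun y => by
    rw [← mul_assoc, hvu', mul_assoc]
  simp only [z2RMatrix, smul_mul_smul_comm, mul_add, add_mul, mul_sub, sub_mul, mul_one,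
    one_mul, mul_assoc, hv, hvu', hvu'']
  match_scalars <;> field_simp <;> ring

theorem z2RMatrix_mul_self (h2 : (2 : K) ≠ 0) {u v : A} (hu : u * u = 1) (hv : v * v = 1)
    (huv : Commute u v) : z2RMatrix K u v * z2RMatrix K u v = 1 := by
  rw [z2RMatrix_mul_z2RMatrix h2 hv huv, hu, z2RMatrix, one_mul, add_right_comm,
    add_sub_cancel_right, ← two_smul K, smul_smul, inv_mul_cancel₀ h2, one_smul]

end Involutions

section Anticommuting

variable {K A : Type*} [Field K] [Ring A] [Algebra K A]

theorem add_mul_sub_mul_mul_eq_one {s n : A} (hs : s * s = 1) (hn : n * s * n = 0) :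
    (s + n) * (s - s * n * s) = 1 := by
  simp only [add_mul, mul_sub, ← mul_assoc, hs, one_mul, hn, zero_mul]
  abel

theorem sub_mul_mul_mul_add_eq_one {s n : A} (hs : s * s = 1) (hn : n * s * n = 0) :
    (s - s * n * s) * (s + n) = 1 := by
  have hsns : s * n * s * n = s * (n * s * n) := by simp only [mul_assoc]
  rw [sub_mul, mul_add, mul_add, hs, mul_assoc (s * n), hs, mul_one, hsns, hn, mul_zero]
  abel

theorem mul_mul_eq_zero_of_mem_adjoin {X w : A} {s : Set A} (hX : X * X = 0)
    (hs : ∀ a ∈ s, X * a = -(a * X)) (hw : w ∈ Algebra.adjoin K s) : X * w * X = 0 := by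
  suffices ∃ w', X * w = w' * X by
    obtain ⟨w', hw'⟩ := this
    rw [hw', mul_assoc, hX, mul_zero]
  induction hw using Algebra.adjoin_induction with
  | mem a ha => exact ⟨-a, by rw [hs a ha, neg_mul]⟩
  | algebraMap r => exact ⟨algebraMap K A r, Algebra.commutes r X |>.symm⟩
  | add y z _ _ hy hz =>
    obtain ⟨y', hy⟩ := hy
    obtain ⟨z', hz⟩ := hz
    exact ⟨y' + z', by rw [mul_add, hy, hz, add_mul]⟩
  | mul y z _ _ hy hz =>
    obtain ⟨y', hy⟩ := hy
    obtain ⟨z', hz⟩ := hz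
    exact ⟨y' * z', by rw [← mul_assoc, hy, mul_assoc, hz, mul_assoc]⟩

theorem commute_mul_of_mul_eq_neg {X u v : A} (hu : X * u = -(u * X))
    (hv : X * v = -(v * X)) : Commute X (u * v) :=
  calc X * (u * v) = -(u * (X * v)) := by rw [← mul_assoc, hu, neg_mul, mul_assoc]
    _ = u * v * X := by rw [hv, mul_neg, neg_neg, mul_assoc]

variable {u v X c : A}

theorem mul_mul_z2RMatrix_mul_mul_eq_zero (hX : X * X = 0) (hXu : X * u = -(u * X))
    (hXv : X * v = -(v * X)) (hc : c ∈ Algebra.adjoin K {u, v}) :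
    c * X * z2RMatrix K u v * (c * X) = 0 := by
  have hS : z2RMatrix K u v ∈ Algebra.adjoin K {u, v} :=
    z2RMatrix_mem (Algebra.subset_adjoin (by simp)) (Algebra.subset_adjoin (by simp))
  have hXs : ∀ a ∈ ({u, v} : Set A), X * a = -(a * X) := by
    rintro a (rfl | rfl) <;> assumption
  calc c * X * z2RMatrix K u v * (c * X) = c * (X * (z2RMatrix K u v * c) * X) := by
        simp only [mul_assoc]
    _ = 0 := by rw [mul_mul_eq_zero_of_mem_adjoin hX hXs (mul_mem hS hc), mul_zero]

theorem commute_z2RMatrix_add_mul (hXu : X * u = -(u * X)) (hXv : X * v = -(v * X))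
    (huv : Commute u v) (hc : c ∈ Algebra.adjoin K {u, v}) :
    Commute (z2RMatrix K u v + c * X) (u * v) := by
  have hs : ∀ b ∈ ({u, v} : Set A), Commute (u * v) b := by
    rintro b (rfl | rfl)
    exacts [(Commute.refl b).mul_left huv.symm, huv.mul_left (Commute.refl b)]
  have hcuv : Commute c (u * v) :=
    (Algebra.commute_of_mem_adjoin_of_forall_mem_commute hc hs).symm
  exact (Commute.z2RMatrix_left (hs u (by simp)).symm (hs v (by simp)).symm).add_left
    (hcuv.mul_left (commute_mul_of_mul_eq_neg hXu hXv))

end Anticommuting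

section Tensor

open Algebra.TensorProduct (tmul_mul_tmul one_def)

variable {K A B : Type*} [Field K] [Ring A] [Ring B] [Algebra K A] [Algebra K B]

theorem z2RMatrix_tmul (a : A) (b : B) :
    z2RMatrix K (a ⊗ₜ[K] (1 : B)) ((1 : A) ⊗ₜ[K] b) =
      (2 : K)⁻¹ • ((1 : A) ⊗ₜ[K] (1 : B) + (1 : A) ⊗ₜ[K] b + a ⊗ₜ[K] (1 : B) - a ⊗ₜ[K] b) := by
  simp only [z2RMatrix, tmul_mul_tmul, mul_one, one_mul, one_def]

theorem z2RMatrix_tmul_mul_self (h2 : (2 : K) ≠ 0) {a : A} {b : B} (ha : a * a = 1)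
    (hb : b * b = 1) :
    z2RMatrix K (a ⊗ₜ[K] (1 : B)) ((1 : A) ⊗ₜ[K] b) *
      z2RMatrix K (a ⊗ₜ[K] (1 : B)) ((1 : A) ⊗ₜ[K] b) = 1 := by
  refine z2RMatrix_mul_self h2 ?_ ?_ ((Commute.one_right a).tmul (Commute.one_left b))
  all_goals simp [tmul_mul_tmul, ha, hb, one_def]

theorem opify_z2RMatrix (a : A) (b : B) :
    opify K A B (z2RMatrix K (a ⊗ₜ[K] (1 : B)) ((1 : A) ⊗ₜ[K] b)) =
      z2RMatrix K (a ⊗ₜ[K] (1 : Bᵐᵒᵖ)) ((1 : A) ⊗ₜ[K] MulOpposite.op b) := by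
  simp [z2RMatrix_tmul, opify]

theorem commute_emb12_one_tmul_one_tmul {C : Type*} [Ring C] [Algebra K C] (y : A ⊗[K] B)
    (c : C) : Commute (emb12 K A B C y) ((1 : A) ⊗ₜ[K] ((1 : B) ⊗ₜ[K] c)) := by
  induction y using TensorProduct.induction_on with
  | zero => simp
  | tmul a b =>
    exact (Commute.one_right a).tmul ((Commute.one_right b).tmul (Commute.one_left c))
  | add y z hy hz => simpa only [map_add] using hy.add_left hz

theorem cond3_of_commute_tmul_self (h2 : (2 : K) ≠ 0) {g : A} {t : B} (ht : t * t = 1)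
    {p : A ⊗[K] A} (hpg : Commute p (g ⊗ₜ[K] g)) :
    let r := z2RMatrix K (g ⊗ₜ[K] (1 : B)) ((1 : A) ⊗ₜ[K] t)
    emb12 K A A B p * emb13 K A A B r * emb23 K A A B r =
      emb23 K A A B r * emb13 K A A B r * emb12 K A A B p := by
  intro r
  set g₁ : A ⊗[K] (A ⊗[K] B) := g ⊗ₜ 1
  set g₂ : A ⊗[K] (A ⊗[K] B) := 1 ⊗ₜ (g ⊗ₜ 1)
  set t₃ : A ⊗[K] (A ⊗[K] B) := 1 ⊗ₜ (1 ⊗ₜ t)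
  have ht₃ : t₃ * t₃ = 1 := by simp [t₃, tmul_mul_tmul, ht, one_def]
  have hg₁ : Commute g₁ t₃ := (Commute.one_right g).tmul (Commute.one_left _)
  have hg₂ : Commute g₂ t₃ :=
    (Commute.one_left 1).tmul ((Commute.one_right g).tmul (Commute.one_left t))
  have h13 : emb13 K A A B r = z2RMatrix K g₁ t₃ := by
    simp [r, g₁, t₃, map_z2RMatrix, emb13, one_def]
  have h23 : emb23 K A A B r = z2RMatrix K g₂ t₃ := by
    simp [r, g₂, t₃, map_z2RMatrix, emb23]
  have h13_23 : emb13 K A A B r * emb23 K A A B r = z2RMatrix K (g₁ * g₂) t₃ := by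
    rw [h13, h23, z2RMatrix_mul_z2RMatrix h2 ht₃ hg₂]
  have h23_13 : emb23 K A A B r * emb13 K A A B r = z2RMatrix K (g₁ * g₂) t₃ := by
    rw [h13, h23, z2RMatrix_mul_z2RMatrix h2 ht₃ hg₁,
      ((Commute.one_right g).tmul (Commute.one_left _) : Commute g₁ g₂).eq]
  have hpg₁₂ : Commute (emb12 K A A B p) (g₁ * g₂) := by
    have hg₁₂ : g₁ * g₂ = emb12 K A A B (g ⊗ₜ g) := by
      simp [g₁, g₂, emb12, tmul_mul_tmul, one_def]
    rw [hg₁₂]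
    exact hpg.map _
  have hpr : Commute (emb12 K A A B p) (z2RMatrix K (g₁ * g₂) t₃) :=
    hpg₁₂.z2RMatrix_right (commute_emb12_one_tmul_one_tmul p t)
  rw [mul_assoc, h13_23, hpr.eq, h23_13]

theorem cond4_z2RMatrix (g : A) (t : B) :
    let r := z2RMatrix K (g ⊗ₜ[K] (1 : B)) ((1 : A) ⊗ₜ[K] t)
    let p' := z2RMatrix K (t ⊗ₜ[K] (1 : B)) ((1 : B) ⊗ₜ[K] t)
    emb12 K A B B r * emb13 K A B B r * emb23 K A B B p' =
      emb23 K A B B p' * emb13 K A B B r * emb12 K A B B r := by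
  intro r p'
  set g₁ : A ⊗[K] (B ⊗[K] B) := g ⊗ₜ 1
  set t₂ : A ⊗[K] (B ⊗[K] B) := 1 ⊗ₜ (t ⊗ₜ 1)
  set t₃ : A ⊗[K] (B ⊗[K] B) := 1 ⊗ₜ (1 ⊗ₜ t)
  have h12 : emb12 K A B B r = z2RMatrix K g₁ t₂ := by
    simp [r, g₁, t₂, map_z2RMatrix, emb12, one_def]
  have h13 : emb13 K A B B r = z2RMatrix K g₁ t₃ := by
    simp [r, g₁, t₃, map_z2RMatrix, emb13, one_def]
  have h23 : emb23 K A B B p' = z2RMatrix K t₂ t₃ := by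
    simp [p', t₂, t₃, map_z2RMatrix, emb23]
  have hgt₂ : Commute g₁ t₂ := (Commute.one_right g).tmul (Commute.one_left _)
  have hgt₃ : Commute g₁ t₃ := (Commute.one_right g).tmul (Commute.one_left _)
  have htt : Commute t₂ t₃ :=
    (Commute.one_left 1).tmul ((Commute.one_right t).tmul (Commute.one_left t))
  have hr : Commute (z2RMatrix K g₁ t₂) (z2RMatrix K g₁ t₃) :=
    .z2RMatrix (.refl g₁) hgt₃ hgt₂.symm htt
  have hrp' : Commute (z2RMatrix K g₁ t₂ * z2RMatrix K g₁ t₃) (z2RMatrix K t₂ t₃) :=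
    (Commute.z2RMatrix hgt₂ hgt₃ (.refl t₂) htt).mul_left
      (.z2RMatrix hgt₂ hgt₃ htt.symm (.refl t₃))
  rw [h12, h13, h23, hrp'.eq, hr.eq, mul_assoc]

theorem isOQANonuple_z2RMatrix (h2 : (2 : K) ≠ 0) {g : A} {t : B} (hg : g * g = 1)
    (ht : t * t = 1) {p pinv : A ⊗[K] A} (hp : p * pinv = 1) (hp' : pinv * p = 1)
    (hpg : Commute p (g ⊗ₜ[K] g)) (τ : A ≃ₐ[K] A) (hτ : τ g = g) :
    IsOQANonuple K p pinv
      (z2RMatrix K (t ⊗ₜ[K] (1 : B)) ((1 : B) ⊗ₜ[K] t))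
      (z2RMatrix K (t ⊗ₜ[K] (1 : B)) ((1 : B) ⊗ₜ[K] t))
      (z2RMatrix K (g ⊗ₜ[K] (1 : B)) ((1 : A) ⊗ₜ[K] t))
      (z2RMatrix K (g ⊗ₜ[K] (1 : B)) ((1 : A) ⊗ₜ[K] t))
      AlgEquiv.refl τ AlgEquiv.refl AlgEquiv.refl where
  comm_auto _ := rfl
  comm_auto' _ := rfl
  p_mul_inv := hp
  p_inv_mul := hp'
  p'_mul_inv := z2RMatrix_tmul_mul_self h2 ht ht
  p'_inv_mul := z2RMatrix_tmul_mul_self h2 ht ht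
  r_mul_inv := z2RMatrix_tmul_mul_self h2 hg ht
  r_inv_mul := z2RMatrix_tmul_mul_self h2 hg ht
  op_mul_inv := by
    simpa [opify_z2RMatrix] using z2RMatrix_tmul_mul_self h2 hg (b := MulOpposite.op t)
      (by rw [← MulOpposite.op_mul, ht, MulOpposite.op_one])
  op_inv_mul := by
    simpa [opify_z2RMatrix] using z2RMatrix_tmul_mul_self h2 hg (b := MulOpposite.op t)
      (by rw [← MulOpposite.op_mul, ht, MulOpposite.op_one])
  map_sigma := by simp
  map_tau := by simp [map_z2RMatrix, hτ]
  cond3 := cond3_of_commute_tmul_self h2 ht hpg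
  cond4 := cond4_z2RMatrix g t

end Tensor

section Sweedler

open Algebra.TensorProduct (tmul_mul_tmul)

variable {K A : Type*} [Field K] [Ring A] [Algebra K A] {g x : A}

def sweedlerP (ν : K) (g x : A) : A ⊗[K] A :=
  (2 : K)⁻¹ • ((1 : A) ⊗ₜ[K] (1 : A) + (1 : A) ⊗ₜ[K] g + g ⊗ₜ[K] (1 : A) - g ⊗ₜ[K] g) +
    (ν / 2) • (x ⊗ₜ[K] x + x ⊗ₜ[K] (g * x) + (g * x) ⊗ₜ[K] (g * x) - (g * x) ⊗ₜ[K] x)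

theorem sweedlerP_eq (ν : K) :
    sweedlerP ν g x = z2RMatrix K (g ⊗ₜ[K] 1) (1 ⊗ₜ g) +
      ((ν / 2) • (1 + 1 ⊗ₜ g - g ⊗ₜ 1 + g ⊗ₜ 1 * 1 ⊗ₜ g)) * x ⊗ₜ[K] x := by
  rw [sweedlerP, z2RMatrix_tmul]
  simp only [smul_mul_assoc, add_mul, sub_mul, one_mul, tmul_mul_tmul, mul_one]
  congr 2
  abel

theorem smul_one_add_sub_add_mul_mem_adjoin (a : K) (u v : A) :
    a • (1 + v - u + u * v) ∈ Algebra.adjoin K {u, v} := by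
  have hu : u ∈ Algebra.adjoin K {u, v} := Algebra.subset_adjoin (by simp)
  have hv : v ∈ Algebra.adjoin K {u, v} := Algebra.subset_adjoin (by simp)
  exact Subalgebra.smul_mem _ (add_mem (sub_mem (add_mem (one_mem _) hv) hu) (mul_mem hu hv)) a

theorem tmul_self_mul_tmul_one (hgx : g * x = -(x * g)) :
    x ⊗ₜ[K] x * g ⊗ₜ[K] 1 = -(g ⊗ₜ[K] 1 * x ⊗ₜ[K] x) := by
  simp [tmul_mul_tmul, hgx, TensorProduct.neg_tmul]

theorem tmul_self_mul_one_tmul (hgx : g * x = -(x * g)) :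
    x ⊗ₜ[K] x * 1 ⊗ₜ[K] g = -(1 ⊗ₜ[K] g * x ⊗ₜ[K] x) := by
  simp [tmul_mul_tmul, hgx, TensorProduct.tmul_neg]

theorem isUnit_sweedlerP (h2 : (2 : K) ≠ 0) (hg : g * g = 1) (hx : x * x = 0)
    (hgx : g * x = -(x * g)) (ν : K) : IsUnit (sweedlerP ν g x) := by
  have hS := z2RMatrix_tmul_mul_self (B := A) h2 hg hg
  have hX : x ⊗ₜ[K] x * x ⊗ₜ[K] x = 0 := by simp [tmul_mul_tmul, hx]
  have hn := mul_mul_z2RMatrix_mul_mul_eq_zero hX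
    (tmul_self_mul_tmul_one hgx) (tmul_self_mul_one_tmul hgx)
    (smul_one_add_sub_add_mul_mem_adjoin (ν / 2) _ _)
  rw [sweedlerP_eq]
  exact ⟨⟨_, _, add_mul_sub_mul_mul_eq_one hS hn, sub_mul_mul_mul_add_eq_one hS hn⟩, rfl⟩

theorem commute_sweedlerP_tmul_self (hgx : g * x = -(x * g)) (ν : K) :
    Commute (sweedlerP ν g x) (g ⊗ₜ[K] g) := by
  have hgg : g ⊗ₜ[K] g = g ⊗ₜ[K] (1 : A) * (1 : A) ⊗ₜ[K] g := by simp [tmul_mul_tmul]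
  rw [sweedlerP_eq, hgg]
  exact commute_z2RMatrix_add_mul (tmul_self_mul_tmul_one hgx) (tmul_self_mul_one_tmul hgx)
    ((Commute.one_right g).tmul (Commute.one_left g))
    (smul_one_add_sub_add_mul_mem_adjoin (ν / 2) _ _)

end Sweedler

end OQApaper

theorem sweedler_nonuple_general (K : Type*) [Field K] (h2 : (2 : K) ≠ 0) (ν : K)
    (H : Type*) [Ring H] [Algebra K H] (g x : H)
    (hg : g * g = 1) (hx : x * x = 0) (hgx : g * x = -(x * g))
    (H' : Type*) [Ring H'] [Algebra K H'] (t : H')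
    (ht : t * t = 1)
    (U : H ≃ₐ[K] H) (hUg : U g = g) :
    ∃ (pinv : H ⊗[K] H) (p'inv : H' ⊗[K] H') (rinv : H ⊗[K] H'),
      IsOQANonuple K
        ((2 : K)⁻¹ • ((1 : H) ⊗ₜ[K] (1 : H) + (1 : H) ⊗ₜ[K] g + g ⊗ₜ[K] (1 : H) -
            g ⊗ₜ[K] g) +
          (ν / 2) • (x ⊗ₜ[K] x + x ⊗ₜ[K] (g * x) + (g * x) ⊗ₜ[K] (g * x) -
            (g * x) ⊗ₜ[K] x))
        pinv
        ((2 : K)⁻¹ • ((1 : H') ⊗ₜ[K] (1 : H') + (1 : H') ⊗ₜ[K] t + t ⊗ₜ[K] (1 : H') -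
          t ⊗ₜ[K] t))
        p'inv
        ((2 : K)⁻¹ • ((1 : H) ⊗ₜ[K] (1 : H') + (1 : H) ⊗ₜ[K] t + g ⊗ₜ[K] (1 : H') -
          g ⊗ₜ[K] t))
        rinv
        AlgEquiv.refl U AlgEquiv.refl AlgEquiv.refl := by
  obtain ⟨P, hP⟩ := isUnit_sweedlerP h2 hg hx hgx ν
  rw [← z2RMatrix_tmul g t, ← z2RMatrix_tmul t t]
  exact ⟨↑P⁻¹, _, _, isOQANonuple_z2RMatrix h2 hg ht (hP ▸ P.mul_inv) (hP ▸ P.inv_mul)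
    (commute_sweedlerP_tmul_self hgx ν) U hUg⟩

/-- Example 4.5: with `H` Sweedler's algebra, `H' = K⟨t⟩` with `t² = 1`,
and the elements `p`, `p'`, `r` of Example 4.5, the tuple
`(H, H', p, p', r, id, U, id, id)` is an OQA nonuple. -/
theorem sweedler_nonuple (K : Type*) [Field K] (h2 : (2 : K) ≠ 0) (ν : K)
    (H : Type*) [Ring H] [Algebra K H] (g x : H)
    (hg : g * g = 1) (hx : x * x = 0) (hgx : g * x = -(x * g))
    (hgen : Algebra.adjoin K ({g, x} : Set H) = ⊤)
    (H' : Type*) [Ring H'] [Algebra K H'] (t : H')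
    (ht : t * t = 1) (hgen' : Algebra.adjoin K ({t} : Set H') = ⊤)
    (U : H ≃ₐ[K] H) (hUg : U g = g) (hUx : U x = -x) :
    ∃ (pinv : H ⊗[K] H) (p'inv : H' ⊗[K] H') (rinv : H ⊗[K] H'),
      IsOQANonuple K
        ((2 : K)⁻¹ • ((1 : H) ⊗ₜ[K] (1 : H) + (1 : H) ⊗ₜ[K] g + g ⊗ₜ[K] (1 : H) -
            g ⊗ₜ[K] g) +
          (ν / 2) • (x ⊗ₜ[K] x + x ⊗ₜ[K] (g * x) + (g * x) ⊗ₜ[K] (g * x) -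
            (g * x) ⊗ₜ[K] x))
        pinv
        ((2 : K)⁻¹ • ((1 : H') ⊗ₜ[K] (1 : H') + (1 : H') ⊗ₜ[K] t + t ⊗ₜ[K] (1 : H') -
          t ⊗ₜ[K] t))
        p'inv
        ((2 : K)⁻¹ • ((1 : H) ⊗ₜ[K] (1 : H') + (1 : H) ⊗ₜ[K] t + g ⊗ₜ[K] (1 : H') -
          g ⊗ₜ[K] t))
        rinv
        AlgEquiv.refl U AlgEquiv.refl AlgEquiv.refl :=
  sweedler_nonuple_general K h2 ν H g x hg hx hgx H' t ht U hUg
end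
end
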